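/- arXiv:2411.09987 — 6 statements merged into one kernel-verified Lean document; each statement's English description precedes it below -/
import Mathlib

section
/- Let M be a simple connected matroid of rank d+1 ≥ 3 admitting two different Cremona bases b and b*. Then there exists an involutive matroid automorphism φ of M with φ(b) = b*. -/
open Set

variable {α : Type*}

/-- The set of non-basis elements on the line through `x` and `y`. -/
def Fij (M : Matroid α) (x y : α) : Set α := M.closure {x, y} \ {x, y}

/-- `b` is a Cremona basis: a base of `M` such that the sets
`Fij = cl{bᵢ,bⱼ} \ {bᵢ,bⱼ}` are pairwise disjoint with union `M.E \ b`. -/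
def IsCremonaBasis (M : Matroid α) (b : Set α) : Prop :=
  M.IsBase b ∧
  (∀ x ∈ b, ∀ y ∈ b, ∀ x' ∈ b, ∀ y' ∈ b, x ≠ y → x' ≠ y' →
    ({x, y} : Set α) ≠ {x', y'} → Disjoint (Fij M x y) (Fij M x' y')) ∧
  (⋃ x ∈ b, ⋃ y ∈ b, ⋃ _ : x ≠ y, Fij M x y) = M.E \ b

/-- The `b`-support of a set `S`. -/
def suppb (M : Matroid α) (b S : Set α) : Set α :=
  (b ∩ S) ∪ ⋃ x ∈ b, ⋃ y ∈ b, ⋃ _ : x ≠ y, ⋃ _ : (S ∩ Fij M x y).Nonempty, ({x, y} : Set α)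

/-- Adjacency in the support graph `G_b(S)`: there is an edge between `x` and `y`
for each element of `S ∩ Fij M x y`. -/
def Adjb (M : Matroid α) (b S : Set α) (x y : α) : Prop :=
  x ∈ b ∧ y ∈ b ∧ x ≠ y ∧ (S ∩ Fij M x y).Nonempty

/-- The support graph `G_b(S)` is connected. -/
def SuppConnected (M : Matroid α) (b S : Set α) : Prop :=
  ∀ x ∈ suppb M b S, ∀ y ∈ suppb M b S, Relation.ReflTransGen (Adjb M b S) x y

/-- The vertex set of the connected component of `x` in the support graph `G_b(S)`. -/
def compOf (M : Matroid α) (b S : Set α) (x : α) : Set α :=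
  {y ∈ suppb M b S | Relation.ReflTransGen (Adjb M b S) x y}

/-- A matroid is simple if every pair of (not necessarily distinct) elements
of the ground set is independent. -/
def MSimple (M : Matroid α) : Prop := ∀ e ∈ M.E, ∀ f ∈ M.E, M.Indep {e, f}

/-- A circuit: a minimal dependent set. -/
def MCircuit (M : Matroid α) (C : Set α) : Prop :=
  C ⊆ M.E ∧ ¬ M.Indep C ∧ ∀ x ∈ C, M.Indep (C \ {x})

/-- A matroid is connected if its ground set is nonempty and every two distinct
elements lie on a common circuit. -/
def MConnected (M : Matroid α) : Prop :=
  M.E.Nonempty ∧ ∀ e ∈ M.E, ∀ f ∈ M.E, e = f ∨ ∃ C, MCircuit M C ∧ e ∈ C ∧ f ∈ C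

/-- The rank of a set in a matroid: the supremum of cardinalities of independent subsets. -/
noncomputable def mRank (M : Matroid α) (X : Set α) : ℕ :=
  sSup {n | ∃ I, M.Indep I ∧ I ⊆ X ∧ I.ncard = n}

/-!
For `x ∈ b \ bs` the `bs`-support of `x` is a pair `{y, z}` with `y ∈ bs \ b` and `z ∈ b ∩ bs`,
and then the `b`-support of `y` is `{x, z}`: the only alternative, some `y ∈ bs \ b` spanned by two
elements of `b \ bs`, puts every element either on their line or in the span of the rest of `b`,
against connectivity. Swapping each such `x` with its partner `y` and fixing everything else gives
an involution `φ` with `supp_bs (φ e) = φ '' supp_b e` for every `e`.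

Elements outside a Cremona basis have supports of size two, so double counting over a circuit `C`
gives `2 |supp_b C| + |C ∩ b| ≤ 2 |C|`, while an independent set is never larger than its support.
If `φ '' C` were independent these inequalities, for `b` and for `bs`, would force `C` to avoid
`b ∪ bs`, where `φ` is the identity. So `φ` maps circuits to dependent sets and, being an
involution, preserves independence.
-/

namespace Matroid

variable {M : Matroid α} {I J : Set α}

lemma Indep.ncard_le_ncard_of_subset_closure (hI : M.Indep I) (hJ : M.Indep J)
    (hJfin : J.Finite) (hIJ : I ⊆ M.closure J) : I.ncard ≤ J.ncard := by
  have h : I.encard ≤ J.encard :=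
    calc I.encard ≤ M.eRk (M.closure J) := hI.encard_le_eRk_of_subset hIJ
      _ = J.encard := by rw [eRk_closure_eq, hJ.eRk_eq_encard]
  exact ENat.toNat_le_toNat h hJfin.encard_lt_top.ne

lemma Indep.union_indep_of_subset_closure {V₁ V₂ A₁ A₂ : Set α} (hV : M.Indep (V₁ ∪ V₂))
    (hVfin : (V₁ ∪ V₂).Finite) (hdisj : Disjoint V₁ V₂) (hA₁ : M.Indep A₁) (hA₂ : M.Indep A₂)
    (h₁ : A₁ ⊆ M.closure V₁) (h₂ : A₂ ⊆ M.closure V₂) : M.Indep (A₁ ∪ A₂) := by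
  obtain ⟨J₁, hJ₁, hAJ₁⟩ := hA₁.subset_isBasis_of_subset h₁
  obtain ⟨J₂, hJ₂, hAJ₂⟩ := hA₂.subset_isBasis_of_subset h₂
  have hV₁ : M.Indep V₁ := hV.subset subset_union_left
  have hV₂ : M.Indep V₂ := hV.subset subset_union_right
  have hJfin : (J₁ ∪ J₂).Finite :=
    (hJ₁.indep.finite_of_subset_isRkFinite hJ₁.subset
      (M.isRkFinite_of_finite (hVfin.subset subset_union_left)).closure).union
    (hJ₂.indep.finite_of_subset_isRkFinite hJ₂.subset
      (M.isRkFinite_of_finite (hVfin.subset subset_union_right)).closure)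
  have hspan : V₁ ∪ V₂ ⊆ M.closure (J₁ ∪ J₂) :=
    union_subset
      ((M.subset_closure V₁).trans (hJ₁.subset_closure.trans
        (M.closure_subset_closure subset_union_left)))
      ((M.subset_closure V₂).trans (hJ₂.subset_closure.trans
        (M.closure_subset_closure subset_union_right)))
  refine ((M.isRkFinite_of_finite hJfin).indep_of_encard_le_eRk ?_).subset
    (union_subset_union hAJ₁ hAJ₂)
  calc (J₁ ∪ J₂).encard ≤ J₁.encard + J₂.encard := encard_union_le _ _
    _ = (V₁ ∪ V₂).encard := by
      rw [hJ₁.encard_eq_encard hV₁.isBasis_closure, hJ₂.encard_eq_encard hV₂.isBasis_closure,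
        encard_union_eq hdisj]
    _ = M.eRk (V₁ ∪ V₂) := hV.eRk_eq_encard.symm
    _ ≤ M.eRk (M.closure (J₁ ∪ J₂)) := M.eRk_mono hspan
    _ = M.eRk (J₁ ∪ J₂) := M.eRk_closure_eq _

end Matroid

lemma MSimple.eq_of_mem_closure_singleton {M : Matroid α} {e f : α} (hs : MSimple M)
    (he : e ∈ M.E) (hf : f ∈ M.E) (h : e ∈ M.closure {f}) : e = f := by
  by_contra hne
  have := (hs e he f hf).notMem_closure_sdiff_of_mem (mem_insert e {f})
  rw [insert_sdiff_self_of_notMem (by simpa using hne)] at this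
  exact this h

lemma MSimple.mem_closure_pair_exchange {M : Matroid α} {e i j : α} (hs : MSimple M)
    (he : e ∈ M.E) (hj : j ∈ M.E) (hej : e ≠ j) (h : e ∈ M.closure {i, j}) :
    i ∈ M.closure {e, j} :=
  M.mem_closure_insert (fun h' => hej (hs.eq_of_mem_closure_singleton he hj h')) h

lemma Finset.two_mul_ncard_biUnion_le_sum {ι : Type*} (C : Finset ι)
    (s : ι → Set α) (hfin : ∀ u ∈ C, (s u).Finite)
    (hcov : ∀ u ∈ C, ∀ v ∈ s u, ∃ u' ∈ C, u' ≠ u ∧ v ∈ s u') :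
    2 * (⋃ u ∈ C, s u).ncard ≤ ∑ u ∈ C, (s u).ncard := by
  classical
  have hU : (⋃ u ∈ C, s u).Finite := C.finite_toSet.biUnion hfin
  set U := hU.toFinset
  let r : ι → α → Prop := fun u v => v ∈ s u
  have habove : ∀ u ∈ C, (U.bipartiteAbove r u).card = (s u).ncard := fun u hu => by
    rw [ncard_eq_toFinset_card _ (hfin u hu)]
    congr 1
    ext v
    simp only [Finset.mem_bipartiteAbove, Finite.mem_toFinset, mem_iUnion, U, r]
    exact ⟨fun h => h.2, fun h => ⟨⟨u, hu, h⟩, h⟩⟩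
  have hbelow : ∀ v ∈ U, 2 ≤ (C.bipartiteBelow r v).card := fun v hv => by
    obtain ⟨u, hu, hvu⟩ := by simpa [U] using hv
    obtain ⟨u', hu', hne, hvu'⟩ := hcov u hu v hvu
    exact Finset.one_lt_card.2 ⟨u, by simp [r, hu, hvu], u', by simp [r, hu', hvu'], hne.symm⟩
  calc 2 * (⋃ u ∈ C, s u).ncard = ∑ _v ∈ U, 2 := by
        rw [Finset.sum_const, smul_eq_mul, mul_comm, ncard_eq_toFinset_card _ hU]
    _ ≤ ∑ v ∈ U, (C.bipartiteBelow r v).card := Finset.sum_le_sum hbelow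
    _ = ∑ u ∈ C, (U.bipartiteAbove r u).card :=
        (Finset.sum_card_bipartiteAbove_eq_sum_card_bipartiteBelow r).symm
    _ = ∑ u ∈ C, (s u).ncard := Finset.sum_congr rfl habove

lemma mRank_eq_ncard {M : Matroid α} {B : Set α} (hfin : M.E.Finite) (hB : M.IsBase B) :
    mRank M M.E = B.ncard := by
  have hle : ∀ n ∈ {n | ∃ I, M.Indep I ∧ I ⊆ M.E ∧ I.ncard = n}, n ≤ B.ncard := by
    rintro n ⟨I, hI, hIE, rfl⟩
    exact hI.ncard_le_ncard_of_subset_closure hB.indep (hfin.subset hB.subset_ground)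
      (hB.closure_eq ▸ hIE)
  exact le_antisymm (csSup_le ⟨_, B, hB.indep, hB.subset_ground, rfl⟩ hle)
    (le_csSup ⟨_, hle⟩ ⟨B, hB.indep, hB.subset_ground, rfl⟩)

/-! ### Supports with respect to a basis -/

namespace Matroid

variable {M : Matroid α} {b b' A S : Set α} {e f i j v : α}

/-- For a Cremona basis this is `{e}` if `e ∈ b` and `{i, j}` if `e ∈ Fij M i j`. -/
def supp (M : Matroid α) (b : Set α) (e : α) : Set α := {v ∈ b | e ∉ M.closure (b \ {v})}

lemma supp_subset (M : Matroid α) (b : Set α) (e : α) : M.supp b e ⊆ b := fun _ h => h.1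

lemma supp_subset_of_mem_closure (hA : A ⊆ b) (h : e ∈ M.closure A) : M.supp b e ⊆ A :=
  fun _ hv => by_contra fun hvA => hv.2 (M.closure_subset_closure
    (subset_sdiff_singleton hA hvA) h)

lemma Indep.supp_eq_singleton (hb : M.Indep b) (he : e ∈ b) : M.supp b e = {e} :=
  (supp_subset_of_mem_closure (singleton_subset_iff.2 he)
    (M.mem_closure_of_mem' rfl (hb.subset_ground he))).antisymm
    (singleton_subset_iff.2 ⟨he, hb.notMem_closure_sdiff_of_mem he⟩)

lemma Indep.mem_supp_of_mem_closure_pair (hb : M.Indep b) (hi : i ∈ b) (hj : j ∈ b)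
    (hij : i ≠ j) (hej : e ∉ M.closure {j}) (he : e ∈ M.closure {i, j}) : i ∈ M.supp b e := by
  refine ⟨hi, fun hecl => hb.notMem_closure_sdiff_of_mem hi ?_⟩
  have hsub : insert e {j} ⊆ M.closure (b \ {i}) :=
    insert_subset hecl (singleton_subset_iff.2
      (M.mem_closure_of_mem' (mem_sdiff_singleton.2 ⟨hj, hij.symm⟩) (hb.subset_ground hj)))
  exact M.closure_subset_closure_of_subset_closure hsub (M.mem_closure_insert hej he)

def suppSet (M : Matroid α) (b S : Set α) : Set α := ⋃ e ∈ S, M.supp b e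

lemma mem_suppSet_iff : v ∈ M.suppSet b S ↔ ∃ e ∈ S, v ∈ M.supp b e := by
  simp [suppSet]

lemma suppSet_subset (M : Matroid α) (b S : Set α) : M.suppSet b S ⊆ b :=
  iUnion₂_subset fun e _ => M.supp_subset b e

lemma supp_subset_suppSet (he : e ∈ S) : M.supp b e ⊆ M.suppSet b S :=
  subset_biUnion_of_mem (u := fun e => M.supp b e) he

lemma suppSet_pair : M.suppSet b {e, f} = M.supp b e ∪ M.supp b f := by
  simp [suppSet]

lemma suppSet_image {ψ : α → α} (h : ∀ e ∈ S, M.supp b' (ψ e) = ψ '' M.supp b e) :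
    M.suppSet b' (ψ '' S) = ψ '' M.suppSet b S := by
  simp only [suppSet, biUnion_image, image_iUnion₂]
  exact iUnion₂_congr h

end Matroid

namespace IsCremonaBasis

open Matroid

variable {M : Matroid α} {b b' A C S : Set α} {e i j u v w x x' y : α}

lemma exists_mem_closure_pair (hb : IsCremonaBasis M b) (he : e ∈ M.E) (heb : e ∉ b) :
    ∃ i ∈ b, ∃ j ∈ b, i ≠ j ∧ e ∈ M.closure {i, j} := by
  have : e ∈ ⋃ x ∈ b, ⋃ y ∈ b, ⋃ _ : x ≠ y, Fij M x y := hb.2.2 ▸ ⟨he, heb⟩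
  simp only [mem_iUnion] at this
  obtain ⟨i, hi, j, hj, hij, hF⟩ := this
  exact ⟨i, hi, j, hj, hij, hF.1⟩

lemma supp_eq_pair (hs : MSimple M) (hb : IsCremonaBasis M b) (he : e ∈ M.E) (heb : e ∉ b)
    (hi : i ∈ b) (hj : j ∈ b) (hij : i ≠ j) (hcl : e ∈ M.closure {i, j}) :
    M.supp b e = {i, j} := by
  have hbE := hb.1.subset_ground
  have hnot : ∀ k ∈ b, e ∉ M.closure {k} := fun k hk h =>
    heb (hs.eq_of_mem_closure_singleton he (hbE hk) h ▸ hk)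
  refine (supp_subset_of_mem_closure (pair_subset hi hj) hcl).antisymm (pair_subset ?_ ?_)
  · exact hb.1.indep.mem_supp_of_mem_closure_pair hi hj hij (hnot j hj) hcl
  · exact hb.1.indep.mem_supp_of_mem_closure_pair hj hi hij.symm (hnot i hi)
      (pair_comm i j ▸ hcl)

lemma exists_supp_eq_pair (hs : MSimple M) (hb : IsCremonaBasis M b) (he : e ∈ M.E)
    (heb : e ∉ b) : ∃ i ∈ b, ∃ j ∈ b, i ≠ j ∧ M.supp b e = {i, j} := by
  obtain ⟨i, hi, j, hj, hij, hcl⟩ := hb.exists_mem_closure_pair he heb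
  exact ⟨i, hi, j, hj, hij, hb.supp_eq_pair hs he heb hi hj hij hcl⟩

lemma mem_closure_supp (hs : MSimple M) (hb : IsCremonaBasis M b) (he : e ∈ M.E) :
    e ∈ M.closure (M.supp b e) := by
  by_cases heb : e ∈ b
  · rw [hb.1.indep.supp_eq_singleton heb]
    exact M.mem_closure_of_mem' rfl he
  · obtain ⟨i, hi, j, hj, hij, hcl⟩ := hb.exists_mem_closure_pair he heb
    rwa [hb.supp_eq_pair hs he heb hi hj hij hcl]

lemma mem_closure_iff_supp_subset (hs : MSimple M) (hb : IsCremonaBasis M b) (he : e ∈ M.E)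
    (hA : A ⊆ b) : e ∈ M.closure A ↔ M.supp b e ⊆ A :=
  ⟨supp_subset_of_mem_closure hA, fun h => M.closure_subset_closure h (hb.mem_closure_supp hs he)⟩

lemma ncard_supp_add (hs : MSimple M) (hb : IsCremonaBasis M b) (he : e ∈ M.E)
    [Decidable (e ∈ b)] : (M.supp b e).ncard + (if e ∈ b then 1 else 0) = 2 := by
  split_ifs with heb
  · rw [hb.1.indep.supp_eq_singleton heb, ncard_singleton]
  · obtain ⟨i, -, j, -, hij, hsupp⟩ := hb.exists_supp_eq_pair hs he heb
    rw [hsupp, ncard_pair hij]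

lemma exists_supp_eq_pair_of_mem (hs : MSimple M) (hb : IsCremonaBasis M b) (he : e ∈ M.E)
    (heb : e ∉ b) (hv : v ∈ M.supp b e) : ∃ w ∈ b, w ≠ v ∧ M.supp b e = {v, w} := by
  obtain ⟨i, hi, j, hj, hij, hsupp⟩ := hb.exists_supp_eq_pair hs he heb
  rw [hsupp] at hv ⊢
  rcases hv with rfl | rfl
  · exact ⟨j, hj, hij.symm, rfl⟩
  · exact ⟨i, hi, hij, pair_comm _ _⟩

lemma supp_eq_pair_of_subset (hs : MSimple M) (hb : IsCremonaBasis M b) (he : e ∈ M.E)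
    (heb : e ∉ b) (hvw : v ≠ w) (h : {v, w} ⊆ M.supp b e) : M.supp b e = {v, w} := by
  obtain ⟨i, -, j, -, hij, hsupp⟩ := hb.exists_supp_eq_pair hs he heb
  rw [hsupp] at h ⊢
  exact (eq_of_subset_of_ncard_le h (by rw [ncard_pair hij, ncard_pair hvw]) (toFinite _)).symm

lemma not_supp_subset_singleton (hs : MSimple M) (hb : IsCremonaBasis M b) (he : e ∈ M.E)
    (heb : e ∉ b) (hw : w ∈ b) : ¬ M.supp b e ⊆ {w} := fun h =>
  heb (hs.eq_of_mem_closure_singleton he (hb.1.subset_ground hw)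
    ((hb.mem_closure_iff_supp_subset hs he (singleton_subset_iff.2 hw)).2 h) ▸ hw)

lemma subset_closure_suppSet (hs : MSimple M) (hb : IsCremonaBasis M b) (hS : S ⊆ M.E) :
    S ⊆ M.closure (M.suppSet b S) := fun _ he =>
  M.closure_subset_closure (supp_subset_suppSet he) (hb.mem_closure_supp hs (hS he))

lemma supp_subset_suppSet_of_mem_closure (hs : MSimple M) (hb : IsCremonaBasis M b)
    (hS : S ⊆ M.E) (h : e ∈ M.closure S) : M.supp b e ⊆ M.suppSet b S :=
  supp_subset_of_mem_closure (suppSet_subset ..)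
    (M.closure_subset_closure_of_subset_closure (hb.subset_closure_suppSet hs hS) h)

lemma ncard_le_ncard_suppSet (hfin : M.E.Finite) (hs : MSimple M) (hb : IsCremonaBasis M b)
    (hS : M.Indep S) : S.ncard ≤ (M.suppSet b S).ncard :=
  hS.ncard_le_ncard_of_subset_closure (hb.1.indep.subset (suppSet_subset ..))
    (hfin.subset ((suppSet_subset ..).trans hb.1.subset_ground))
    (hb.subset_closure_suppSet hs hS.subset_ground)

lemma exists_ne_mem_supp_of_isCircuit (hs : MSimple M) (hb : IsCremonaBasis M b)
    (hC : M.IsCircuit C) (hu : u ∈ C) (hv : v ∈ M.supp b u) :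
    ∃ u' ∈ C, u' ≠ u ∧ v ∈ M.supp b u' := by
  have h := hb.supp_subset_suppSet_of_mem_closure hs (sdiff_subset.trans hC.subset_ground)
    (hC.mem_closure_sdiff_singleton_of_mem hu) hv
  obtain ⟨u', hu', hvu'⟩ := mem_suppSet_iff.1 h
  exact ⟨u', hu'.1, hu'.2, hvu'⟩

lemma two_mul_ncard_suppSet_add_le_of_isCircuit (hfin : M.E.Finite) (hs : MSimple M)
    (hb : IsCremonaBasis M b) (hC : M.IsCircuit C) :
    2 * (M.suppSet b C).ncard + (C ∩ b).ncard ≤ 2 * C.ncard := by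
  classical
  have hCfin := hfin.subset hC.subset_ground
  set Cf := hCfin.toFinset
  have hdouble := Cf.two_mul_ncard_biUnion_le_sum (M.supp b)
    (fun u _ => (hfin.subset hb.1.subset_ground).subset (M.supp_subset b u))
    (by simpa [Cf] using fun u hu v hv => hb.exists_ne_mem_supp_of_isCircuit hs hC hu hv)
  have hsum : ∑ u ∈ Cf, ((M.supp b u).ncard + if u ∈ b then 1 else 0) = ∑ _u ∈ Cf, 2 :=
    Finset.sum_congr rfl fun u hu =>
      hb.ncard_supp_add hs (hC.subset_ground (by simpa [Cf] using hu))
  rw [Finset.sum_add_distrib, Finset.sum_boole, Finset.sum_const, smul_eq_mul,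
    ← ncard_eq_toFinset_card _ hCfin] at hsum
  have hinter : (C ∩ b).ncard = (Cf.filter (· ∈ b)).card := by
    rw [ncard_eq_toFinset_card _ (hCfin.subset inter_subset_left)]
    congr 1
    ext
    simp [Cf]
  have hU : (⋃ u ∈ Cf, M.supp b u) = M.suppSet b C := by simp [Cf, suppSet]
  rw [hU] at hdouble
  push_cast at hsum
  omega

lemma inter_eq_empty_of_indep_image (hfin : M.E.Finite) (hs : MSimple M)
    (hb : IsCremonaBasis M b) (hb' : IsCremonaBasis M b') {ψ : α → α} (hψ : ψ.Injective)
    (hsupp : ∀ e ∈ C, M.supp b' (ψ e) = ψ '' M.supp b e) (hC : M.IsCircuit C)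
    (hind : M.Indep (ψ '' C)) : C ∩ b = ∅ := by
  have hcount := hb.two_mul_ncard_suppSet_add_le_of_isCircuit hfin hs hC
  have hle : C.ncard ≤ (M.suppSet b C).ncard :=
    calc C.ncard = (ψ '' C).ncard := (ncard_image_of_injective C hψ).symm
      _ ≤ (M.suppSet b' (ψ '' C)).ncard := hb'.ncard_le_ncard_suppSet hfin hs hind
      _ = (M.suppSet b C).ncard := by rw [suppSet_image hsupp, ncard_image_of_injective _ hψ]
  exact (ncard_eq_zero ((hfin.subset hC.subset_ground).subset inter_subset_left)).1 (by omega)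

/-! ### Two Cremona bases -/

lemma mem_supp_of_mem_supp (hs : MSimple M) (hb : IsCremonaBasis M b)
    (hb' : IsCremonaBasis M b') (hu : u ∈ b \ b') (hv : v ∈ b' \ b) (huv : u ∈ M.supp b v) :
    v ∈ M.supp b' u := by
  have hbE := hb.1.subset_ground
  have hvE := hb'.1.subset_ground hv.1
  obtain ⟨z, hz, hzu, hvsupp⟩ := hb.exists_supp_eq_pair_of_mem hs hvE hv.2 huv
  have hvcl : v ∈ M.closure {u, z} := hvsupp ▸ hb.mem_closure_supp hs hvE
  have hvz : v ≠ z := fun h => hv.2 (h ▸ hz)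
  by_contra hvu
  have hucl : u ∈ M.closure (b' \ {v}) := by_contra fun h => hvu ⟨hv.1, h⟩
  have hvsuppz : v ∈ M.supp b' z := ⟨hv.1, fun hzcl => hb'.1.indep.notMem_closure_sdiff_of_mem
    hv.1 (M.closure_subset_closure_of_subset_closure (pair_subset hucl hzcl) hvcl)⟩
  have hzb' : z ∉ b' := fun h => hvz (by simpa [hb'.1.indep.supp_eq_singleton h] using hvsuppz)
  obtain ⟨w, hw, -, hzsupp⟩ := hb'.exists_supp_eq_pair_of_mem hs (hbE hz) hzb' hvsuppz
  have hzcl : z ∈ M.closure {v, w} := hzsupp ▸ hb'.mem_closure_supp hs (hbE hz)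
  have hucl' : u ∈ M.closure {v, w} :=
    M.closure_subset_closure_of_subset_closure
      (pair_subset (M.mem_closure_of_mem' (mem_insert v _) hvE) hzcl)
      (hs.mem_closure_pair_exchange hvE (hbE hz) hvz hvcl)
  have hsub := (hb'.mem_closure_iff_supp_subset hs (hbE hu.1) (pair_subset hv.1 hw)).1 hucl'
  exact hb'.not_supp_subset_singleton hs (hbE hu.1) hu.2 hw fun t ht =>
    (hsub ht).resolve_left fun htv => hvu (htv ▸ ht)

lemma exists_mem_sdiff_supp_eq_pair (hs : MSimple M) (hb : IsCremonaBasis M b)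
    (hb' : IsCremonaBasis M b') (hx : x ∈ b \ b') (hx' : x' ∈ b \ b') (hxx' : x ≠ x')
    (hy : y ∈ b' \ b) (hysupp : M.supp b y = {x, x'}) :
    ∃ w ∈ b' \ b, w ≠ y ∧ M.supp b w = {x, x'} ∧ M.supp b' x = {y, w} := by
  have hbE := hb.1.subset_ground
  have hxE := hbE hx.1
  have hyE := hb'.1.subset_ground hy.1
  have hxy : x ≠ y := fun h => hy.2 (h ▸ hx.1)
  have hL : M.closure {x, y} ⊆ M.closure {x, x'} :=
    M.closure_subset_closure_of_subset_closure (pair_subset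
      (M.mem_closure_of_mem' (mem_insert x _) hxE) (hysupp ▸ hb.mem_closure_supp hs hyE))
  have hyx : y ∈ M.supp b' x := hb.mem_supp_of_mem_supp hs hb' hx hy (by simp [hysupp])
  obtain ⟨w, hw, hwy, hxsupp⟩ := hb'.exists_supp_eq_pair_of_mem hs hxE hx.2 hyx
  have hwE := hb'.1.subset_ground hw
  have hwcl : w ∈ M.closure {x, x'} := hL <| hs.mem_closure_pair_exchange hxE hyE hxy <|
    pair_comm y w ▸ hxsupp ▸ hb'.mem_closure_supp hs hxE
  have hwb : w ∉ b := fun hwb => by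
    have h := supp_subset_of_mem_closure (pair_subset hx.1 hx'.1) hwcl
    rw [hb.1.indep.supp_eq_singleton hwb, singleton_subset_iff] at h
    rcases h with rfl | rfl
    exacts [hx.2 hw, hx'.2 hw]
  exact ⟨w, ⟨hw, hwb⟩, hwy, hb.supp_eq_pair hs hwE hwb hx.1 hx'.1 hxx' hwcl, hxsupp⟩

lemma mem_closure_pair_of_mem_supp (hs : MSimple M) (hb : IsCremonaBasis M b)
    (hb' : IsCremonaBasis M b') (hx : x ∈ b \ b') (hx' : x' ∈ b \ b') (hxx' : x ≠ x')
    (hy : y ∈ b' \ b) (hysupp : M.supp b y = {x, x'}) (he : e ∈ M.E) (hxe : x ∈ M.supp b e) :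
    e ∈ M.closure {x, x'} := by
  have hbE := hb.1.subset_ground
  have hL : ∀ t ∈ M.E, M.supp b t ⊆ {x, x'} → t ∈ M.closure {x, x'} := fun t ht h =>
    (hb.mem_closure_iff_supp_subset hs ht (pair_subset hx.1 hx'.1)).2 h
  obtain ⟨w, hw, hwy, hwsupp, hxsupp⟩ :=
    exists_mem_sdiff_supp_eq_pair hs hb hb' hx hx' hxx' hy hysupp
  have hyL := hL y (hb'.1.subset_ground hy.1) hysupp.subset
  have hwL := hL w (hb'.1.subset_ground hw.1) hwsupp.subset
  by_cases heb : e ∈ b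
  · rw [hb.1.indep.supp_eq_singleton heb, mem_singleton_iff] at hxe
    subst hxe
    exact M.mem_closure_of_mem' (mem_insert _ _) he
  by_cases heb' : e ∈ b'
  · have hex := hb.mem_supp_of_mem_supp hs hb' hx ⟨heb', heb⟩ hxe
    rw [hxsupp] at hex
    rcases hex with rfl | rfl
    exacts [hyL, hwL]
  obtain ⟨q, hq, hqx, hesupp⟩ := hb.exists_supp_eq_pair_of_mem hs he heb hxe
  by_cases hqx' : q = x'
  · exact hL e he (hesupp ▸ hqx' ▸ subset_rfl)
  -- otherwise `x ∈ cl {e, q}` puts both `b'`-partners `y, w` of `x` into `supp_{b'} e`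
  have hnot : ∀ t ∈ b' \ b, M.supp b t = {x, x'} → t ∉ M.supp b' q := fun t ht htsupp htq => by
    by_cases hqb' : q ∈ b'
    · rw [hb'.1.indep.supp_eq_singleton hqb', mem_singleton_iff] at htq
      exact ht.2 (htq ▸ hq)
    · have hqt := hb'.mem_supp_of_mem_supp hs hb ht ⟨hq, hqb'⟩ htq
      rw [htsupp] at hqt
      rcases hqt with h | h
      exacts [hqx h, hqx' h]
  have hxcl : x ∈ M.closure {e, q} := hs.mem_closure_pair_exchange he (hbE hq)
    (fun h => heb (h ▸ hq)) (hesupp ▸ hb.mem_closure_supp hs he)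
  have hsub := hb'.supp_subset_suppSet_of_mem_closure hs (pair_subset he (hbE hq)) hxcl
  rw [suppSet_pair, hxsupp] at hsub
  have hyw : {y, w} ⊆ M.supp b' e := pair_subset
    ((hsub (mem_insert y _)).resolve_right (hnot y hy hysupp))
    ((hsub (mem_insert_of_mem y (mem_singleton _))).resolve_right (hnot w hw hwsupp))
  exact M.closure_subset_closure_of_subset_closure (pair_subset hyL hwL)
    (hb'.supp_eq_pair_of_subset hs he heb' hwy.symm hyw ▸ hb'.mem_closure_supp hs he)

/-- Were `supp_b y = {x, x'} ⊆ b \ b'`, every element would lie on `cl {x, x'}` or in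
`cl (b \ {x, x'})`, and a circuit through `x` and a point of `b \ {x, x'}` would split into two
independent pieces. -/
lemma supp_inter_nonempty (hfin : M.E.Finite) (hs : MSimple M) (hconn : MConnected M)
    (hb : IsCremonaBasis M b) (hb' : IsCremonaBasis M b') (hcard : 3 ≤ b.ncard)
    (hy : y ∈ b' \ b) : (M.supp b y ∩ b').Nonempty := by
  have hbE := hb.1.subset_ground
  rw [← not_disjoint_iff_nonempty_inter]
  intro hdisj
  obtain ⟨x, hxb, x', hx'b, hxx', hysupp⟩ :=
    hb.exists_supp_eq_pair hs (hb'.1.subset_ground hy.1) hy.2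
  have hx : x ∈ b \ b' := ⟨hxb, hdisj.notMem_of_mem_left (by simp [hysupp])⟩
  have hx' : x' ∈ b \ b' := ⟨hx'b, hdisj.notMem_of_mem_left (by simp [hysupp])⟩
  have hsplit : ∀ e ∈ M.E, e ∈ M.closure {x, x'} ∨ e ∈ M.closure (b \ {x, x'}) := by
    intro e he
    by_cases hxe : x ∈ M.supp b e
    · exact .inl (mem_closure_pair_of_mem_supp hs hb hb' hx hx' hxx' hy hysupp he hxe)
    by_cases hx'e : x' ∈ M.supp b e
    · exact .inl (pair_comm x' x ▸ mem_closure_pair_of_mem_supp hs hb hb' hx' hx hxx'.symm hy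
        (pair_comm x x' ▸ hysupp) he hx'e)
    refine .inr ((hb.mem_closure_iff_supp_subset hs he sdiff_subset).2 fun v hv => ⟨hv.1, ?_⟩)
    rintro (rfl | rfl)
    exacts [hxe hv, hx'e hv]
  obtain ⟨q, hqb, hqxx'⟩ : (b \ {x, x'}).Nonempty := by
    rw [nonempty_iff_ne_empty, Ne, sdiff_eq_empty]
    intro hsub
    have := ncard_le_ncard hsub (toFinite _)
    rw [ncard_pair hxx'] at this
    omega
  obtain ⟨C, hC, hxC, hqC⟩ := (hconn.2 x (hbE hxb) q (hbE hqb)).resolve_left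
    fun h => hqxx' (h ▸ mem_insert x _)
  have hqL : q ∉ M.closure {x, x'} := fun h => hqxx' (by
    simpa [hb.1.indep.supp_eq_singleton hqb] using
      supp_subset_of_mem_closure (pair_subset hxb hx'b) h)
  have hxL : x ∈ M.closure {x, x'} := M.mem_closure_of_mem' (mem_insert x _) (hbE hxb)
  have hbsplit : {x, x'} ∪ b \ {x, x'} = b := union_sdiff_cancel (pair_subset hxb hx'b)
  refine hC.2.1 (inter_union_sdiff C (M.closure {x, x'}) ▸ ?_)
  refine (hb.1.indep.subset hbsplit.subset).union_indep_of_subset_closure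
    ((hfin.subset hbE).subset hbsplit.subset) disjoint_sdiff_right
    ((hC.2.2 q hqC).subset fun e he => ⟨he.1, fun h => hqL ((mem_singleton_iff.1 h) ▸ he.2)⟩)
    ((hC.2.2 x hxC).subset fun e he => ⟨he.1, fun h => he.2 ((mem_singleton_iff.1 h) ▸ hxL)⟩)
    inter_subset_right fun e he => (hsplit e (hC.1 he.1)).resolve_left he.2

lemma exists_partner (hfin : M.E.Finite) (hs : MSimple M) (hconn : MConnected M)
    (hb : IsCremonaBasis M b) (hb' : IsCremonaBasis M b') (hcard : 3 ≤ b.ncard)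
    (hy : y ∈ b' \ b) :
    ∃ x ∈ b \ b', ∃ z ∈ b ∩ b', M.supp b y = {x, z} ∧ M.supp b' x = {y, z} := by
  have hbE := hb.1.subset_ground
  have hyE := hb'.1.subset_ground hy.1
  obtain ⟨z, hzy, hzb'⟩ := supp_inter_nonempty hfin hs hconn hb hb' hcard hy
  obtain ⟨x, hxb, hxz, hysupp⟩ := hb.exists_supp_eq_pair_of_mem hs hyE hy.2 hzy
  have hycl : y ∈ M.closure {z, x} := hysupp ▸ hb.mem_closure_supp hs hyE
  have hyz : y ≠ z := fun h => hy.2 (h ▸ hzy.1)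
  have hxb' : x ∉ b' := fun hxb' => hb'.1.indep.notMem_closure_sdiff_of_mem hy.1
    (M.closure_subset_closure (pair_subset (mem_sdiff_singleton.2 ⟨hzb', hyz.symm⟩)
      (mem_sdiff_singleton.2 ⟨hxb', fun h => hy.2 (h ▸ hxb)⟩)) hycl)
  refine ⟨x, ⟨hxb, hxb'⟩, z, ⟨hzy.1, hzb'⟩, hysupp.trans (pair_comm z x), ?_⟩
  exact hb'.supp_eq_pair hs (hbE hxb) hxb' hy.1 hzb' hyz
    (hs.mem_closure_pair_exchange hyE (hbE hzy.1) hyz (pair_comm z x ▸ hycl))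

end IsCremonaBasis

/-! ### The involution -/

namespace Matroid

variable {M : Matroid α} {b b' : Set α} {e x y z : α}

open Classical in
/-- Junk value `x` when `supp_{b'} x ⊆ b`. -/
noncomputable def partner (M : Matroid α) (b b' : Set α) (x : α) : α :=
  if h : (M.supp b' x \ b).Nonempty then h.some else x

open Classical in
noncomputable def cremonaSwap (M : Matroid α) (b b' : Set α) (e : α) : α :=
  if e ∈ b \ b' then M.partner b b' e else if e ∈ b' \ b then M.partner b' b e else e

lemma partner_eq (h : M.supp b' x = {y, z}) (hy : y ∉ b) (hz : z ∈ b) :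
    M.partner b b' x = y := by
  have hsd : M.supp b' x \ b = {y} := by
    rw [h, insert_sdiff_of_notMem _ hy, sdiff_eq_empty.2 (singleton_subset_iff.2 hz),
      insert_empty_eq]
  have hne : (M.supp b' x \ b).Nonempty := hsd ▸ singleton_nonempty y
  rw [partner, dif_pos hne]
  exact (Set.ext_iff.1 hsd _).1 hne.some_mem

lemma cremonaSwap_comm (M : Matroid α) (b b' : Set α) :
    M.cremonaSwap b' b = M.cremonaSwap b b' := by
  funext e
  unfold cremonaSwap
  split_ifs <;> simp_all

lemma cremonaSwap_eq_of_supp_eq (hx : x ∈ b \ b') (h : M.supp b' x = {y, z}) (hy : y ∉ b)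
    (hz : z ∈ b) : M.cremonaSwap b b' x = y := by
  rw [cremonaSwap, if_pos hx, partner_eq h hy hz]

lemma cremonaSwap_of_notMem (h : e ∉ b \ b') (h' : e ∉ b' \ b) : M.cremonaSwap b b' e = e := by
  rw [cremonaSwap, if_neg h, if_neg h']

end Matroid

/-- `φ` swaps each `x ∈ b \ b'` with a partner `φ x ∈ b' \ b` on the line through `x` and some
`z ∈ b ∩ b'`, and fixes every other element. -/
structure IsCremonaSwap (M : Matroid α) (b b' : Set α) (φ : α → α) : Prop where
  involutive : Function.Involutive φ
  apply_of_notMem : ∀ e, e ∉ b → e ∉ b' → φ e = e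
  apply_of_mem_inter : ∀ e ∈ b ∩ b', φ e = e
  mapsTo_sdiff : ∀ y ∈ b' \ b, φ y ∈ b \ b'
  partner_spec : ∀ x ∈ b \ b', φ x ∈ b' \ b ∧
    ∃ z ∈ b ∩ b', M.supp b' x = {φ x, z} ∧ M.supp b (φ x) = {x, z}

namespace IsCremonaBasis

open Matroid

variable {M : Matroid α} {b b' : Set α}

lemma isCremonaSwap_cremonaSwap (hfin : M.E.Finite) (hs : MSimple M) (hconn : MConnected M)
    (hb : IsCremonaBasis M b) (hb' : IsCremonaBasis M b') (hcard : 3 ≤ b.ncard) :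
    IsCremonaSwap M b b' (M.cremonaSwap b b') := by
  have hcard' : 3 ≤ b'.ncard := hb.1.ncard_eq_ncard_of_isBase hb'.1 ▸ hcard
  have hswap : ∀ x ∈ b \ b', ∀ y ∈ b' \ b, ∀ z ∈ b ∩ b', M.supp b' x = {y, z} →
      M.supp b y = {x, z} → M.cremonaSwap b b' x = y ∧ M.cremonaSwap b b' y = x :=
    fun x hx y hy z hz h₁ h₂ => ⟨cremonaSwap_eq_of_supp_eq hx h₁ hy.2 hz.1,
      cremonaSwap_comm M b b' ▸ cremonaSwap_eq_of_supp_eq hy h₂ hx.2 hz.2⟩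
  have hX : ∀ x ∈ b \ b', ∃ y ∈ b' \ b, ∃ z ∈ b ∩ b', M.supp b' x = {y, z} ∧
      M.supp b y = {x, z} ∧ M.cremonaSwap b b' x = y ∧ M.cremonaSwap b b' y = x := fun x hx => by
    obtain ⟨y, hy, z, hz, h₁, h₂⟩ := hb'.exists_partner hfin hs hconn hb hcard' hx
    exact ⟨y, hy, z, hz.symm, h₁, h₂, hswap x hx y hy z hz.symm h₁ h₂⟩
  have hY : ∀ y ∈ b' \ b, ∃ x ∈ b \ b',
      M.cremonaSwap b b' y = x ∧ M.cremonaSwap b b' x = y := fun y hy => by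
    obtain ⟨x, hx, z, hz, h₁, h₂⟩ := hb.exists_partner hfin hs hconn hb' hcard hy
    exact ⟨x, hx, (hswap x hx y hy z hz h₂ h₁).symm⟩
  have hfix : ∀ e, e ∉ b \ b' → e ∉ b' \ b → M.cremonaSwap b b' e = e :=
    fun _ => cremonaSwap_of_notMem
  refine ⟨fun e => ?_, fun e h₁ h₂ => hfix e (fun h => h₁ h.1) (fun h => h₂ h.1),
    fun e he => hfix e (fun h => h.2 he.2) (fun h => h.2 he.1), fun y hy => ?_, fun x hx => ?_⟩
  · by_cases h₁ : e ∈ b \ b'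
    · obtain ⟨y, -, -, -, -, -, hxy, hyx⟩ := hX e h₁
      rw [hxy, hyx]
    by_cases h₂ : e ∈ b' \ b
    · obtain ⟨x, -, hyx, hxy⟩ := hY e h₂
      rw [hyx, hxy]
    rw [hfix e h₁ h₂, hfix e h₁ h₂]
  · obtain ⟨x, hx, hyx, -⟩ := hY y hy
    exact hyx ▸ hx
  · obtain ⟨y, hy, z, hz, h₁, h₂, hxy, -⟩ := hX x hx
    exact ⟨hxy ▸ hy, z, hz, hxy ▸ h₁, hxy ▸ h₂⟩

end IsCremonaBasis

namespace IsCremonaSwap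

open Matroid

variable {M : Matroid α} {b b' I : Set α} {φ : α → α} {e x z : α}

lemma symm (hφ : IsCremonaSwap M b b' φ) : IsCremonaSwap M b' b φ where
  involutive := hφ.involutive
  apply_of_notMem e h₁ h₂ := hφ.apply_of_notMem e h₂ h₁
  apply_of_mem_inter e he := hφ.apply_of_mem_inter e ⟨he.2, he.1⟩
  mapsTo_sdiff x hx := (hφ.partner_spec x hx).1
  partner_spec y hy := by
    obtain ⟨-, z, hz, h₁, h₂⟩ := hφ.partner_spec (φ y) (hφ.mapsTo_sdiff y hy)
    rw [hφ.involutive y] at h₁ h₂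
    exact ⟨hφ.mapsTo_sdiff y hy, z, ⟨hz.2, hz.1⟩, h₂, h₁⟩

lemma apply_mem_of_mem (hφ : IsCremonaSwap M b b' φ) (he : e ∈ b) : φ e ∈ b' := by
  by_cases heb' : e ∈ b'
  · rwa [hφ.apply_of_mem_inter e ⟨he, heb'⟩]
  · exact (hφ.partner_spec e ⟨he, heb'⟩).1.1

lemma image_eq (hφ : IsCremonaSwap M b b' φ) : φ '' b = b' :=
  (image_subset_iff.2 fun _ => hφ.apply_mem_of_mem).antisymm fun e he =>
    ⟨φ e, hφ.symm.apply_mem_of_mem he, hφ.involutive e⟩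

lemma mapsTo (hφ : IsCremonaSwap M b b' φ) (hb : IsCremonaBasis M b)
    (hb' : IsCremonaBasis M b') : MapsTo φ M.E M.E := fun e he => by
  by_cases heb : e ∈ b
  · exact hb'.1.subset_ground (hφ.apply_mem_of_mem heb)
  by_cases heb' : e ∈ b'
  · exact hb.1.subset_ground (hφ.symm.apply_mem_of_mem heb')
  rwa [hφ.apply_of_notMem e heb heb']

lemma apply_mem_supp_of_mem_sdiff (hφ : IsCremonaSwap M b b' φ) (hs : MSimple M)
    (hb : IsCremonaBasis M b) (hb' : IsCremonaBasis M b') (he : e ∈ M.E) (heb : e ∉ b)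
    (hx : x ∈ b \ b') (hxe : x ∈ M.supp b e) : φ x ∈ M.supp b' e := by
  have hbE := hb.1.subset_ground
  obtain ⟨q, hq, hqx, hesupp⟩ := hb.exists_supp_eq_pair_of_mem hs he heb hxe
  obtain ⟨hφx, _, -, hxsupp, -⟩ := hφ.partner_spec x hx
  have hxcl : x ∈ M.closure {e, q} := hs.mem_closure_pair_exchange he (hbE hq)
    (fun h => heb (h ▸ hq)) (hesupp ▸ hb.mem_closure_supp hs he)
  have hsub := hb'.supp_subset_suppSet_of_mem_closure hs (pair_subset he (hbE hq)) hxcl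
  rw [suppSet_pair, hxsupp] at hsub
  refine (hsub (mem_insert _ _)).resolve_right fun hφxq => ?_
  by_cases hqb' : q ∈ b'
  · rw [hb'.1.indep.supp_eq_singleton hqb', mem_singleton_iff] at hφxq
    exact hφx.2 (hφxq ▸ hq)
  · obtain ⟨-, z', hz', hqsupp, -⟩ := hφ.partner_spec q ⟨hq, hqb'⟩
    rw [hqsupp] at hφxq
    rcases hφxq with h | h
    · exact hqx (hφ.involutive.injective h).symm
    · exact hφx.2 (h ▸ hz'.1)

lemma mem_supp_of_mem_inter (hφ : IsCremonaSwap M b b' φ) (hs : MSimple M)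
    (hb : IsCremonaBasis M b) (hb' : IsCremonaBasis M b') (he : e ∈ M.E) (heb : e ∉ b)
    (heb' : e ∉ b') (hz : z ∈ b ∩ b') (hze : z ∈ M.supp b e) : z ∈ M.supp b' e := by
  have hbE := hb.1.subset_ground
  have hzE := hbE hz.1
  obtain ⟨q, hq, hqz, hesupp⟩ := hb.exists_supp_eq_pair_of_mem hs he heb hze
  have hecl : e ∈ M.closure {z, q} := hesupp ▸ hb.mem_closure_supp hs he
  by_cases hqb' : q ∈ b'
  · rw [hb'.supp_eq_pair hs he heb' hz.2 hqb' hqz.symm hecl]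
    exact mem_insert z _
  obtain ⟨hφq, z₀, hz₀, hqsupp, hφqsupp⟩ := hφ.partner_spec q ⟨hq, hqb'⟩
  have hφqE := hb'.1.subset_ground hφq.1
  have hφqcl : φ q ∈ M.closure {q, z₀} := hφqsupp ▸ hb.mem_closure_supp hs hφqE
  by_cases hzz₀ : z = z₀
  · subst hzz₀
    have hqcl : q ∈ M.closure {φ q, z} := hs.mem_closure_pair_exchange hφqE hzE
      (fun h => hφq.2 (h ▸ hz.1)) hφqcl
    have hecl' : e ∈ M.closure {φ q, z} := M.closure_subset_closure_of_subset_closure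
      (pair_subset (M.mem_closure_of_mem' (mem_insert_of_mem _ (mem_singleton _)) hzE) hqcl) hecl
    rw [hb'.supp_eq_pair hs he heb' hφq.1 hz.2 (fun h => hφq.2 (h ▸ hz.1)) hecl']
    exact mem_insert_of_mem _ (mem_singleton _)
  -- otherwise `supp_{b'} e = {φ q, z₀}`, so `e ∈ cl {q, z₀}`, which misses `z ∈ supp_b e`
  exfalso
  have hqcl : q ∈ M.closure {e, z} := hs.mem_closure_pair_exchange he hzE
    (fun h => heb (h ▸ hz.1)) (pair_comm z q ▸ hecl)
  have hsub := hb'.supp_subset_suppSet_of_mem_closure hs (pair_subset he hzE) hqcl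
  rw [suppSet_pair, hqsupp, hb'.1.indep.supp_eq_singleton hz.2] at hsub
  have hz₀e : z₀ ∈ M.supp b' e :=
    (hsub (mem_insert_of_mem _ (mem_singleton _))).resolve_right (Ne.symm hzz₀)
  have hφqe : φ q ∈ M.supp b' e := (hsub (mem_insert _ _)).resolve_right
    fun h => hφq.2 ((mem_singleton_iff.1 h) ▸ hz.1)
  have hesupp' : M.supp b' e = {φ q, z₀} := hb'.supp_eq_pair_of_subset hs he heb'
    (fun h => hφq.2 (h ▸ hz₀.1)) (pair_subset hφqe hz₀e)
  have hecl' : e ∈ M.closure {q, z₀} := M.closure_subset_closure_of_subset_closure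
    (pair_subset hφqcl (M.mem_closure_of_mem' (mem_insert_of_mem _ (mem_singleton _)) (hbE hz₀.1)))
    (hesupp' ▸ hb'.mem_closure_supp hs he)
  rcases supp_subset_of_mem_closure (pair_subset hq hz₀.1) hecl' hze with h | h
  exacts [hqz h.symm, hzz₀ h]

lemma supp_apply (hφ : IsCremonaSwap M b b' φ) (hs : MSimple M) (hb : IsCremonaBasis M b)
    (hb' : IsCremonaBasis M b') (he : e ∈ M.E) : M.supp b' (φ e) = φ '' M.supp b e := by
  by_cases heb : e ∈ b
  · rw [hb.1.indep.supp_eq_singleton heb,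
      hb'.1.indep.supp_eq_singleton (hφ.apply_mem_of_mem heb), image_singleton]
  by_cases heb' : e ∈ b'
  · obtain ⟨-, z, hz, h₁, h₂⟩ := hφ.partner_spec (φ e) (hφ.mapsTo_sdiff e ⟨heb', heb⟩)
    rw [hφ.involutive e] at h₁ h₂
    rw [h₁, h₂, image_pair, hφ.involutive e, hφ.apply_of_mem_inter z hz]
  rw [hφ.apply_of_notMem e heb heb']
  have hmem : ∀ t ∈ M.supp b e, φ t ∈ M.supp b' e := fun t ht => by
    by_cases htb' : t ∈ b'
    · rw [hφ.apply_of_mem_inter t ⟨ht.1, htb'⟩]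
      exact hφ.mem_supp_of_mem_inter hs hb hb' he heb heb' ⟨ht.1, htb'⟩ ht
    · exact hφ.apply_mem_supp_of_mem_sdiff hs hb hb' he heb ⟨ht.1, htb'⟩ ht
  obtain ⟨i, -, j, -, hij, hsupp⟩ := hb.exists_supp_eq_pair hs he heb
  rw [hsupp] at hmem ⊢
  rw [image_pair]
  exact hb'.supp_eq_pair_of_subset hs he heb' (hφ.involutive.injective.ne hij)
    (pair_subset (hmem i (mem_insert i _)) (hmem j (mem_insert_of_mem i (mem_singleton _))))

lemma not_indep_image_of_isCircuit (hφ : IsCremonaSwap M b b' φ) (hfin : M.E.Finite)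
    (hs : MSimple M) (hb : IsCremonaBasis M b) (hb' : IsCremonaBasis M b') {C : Set α}
    (hC : M.IsCircuit C) : ¬ M.Indep (φ '' C) := fun hind => by
  have hCE := hC.subset_ground
  have h₁ := hb.inter_eq_empty_of_indep_image hfin hs hb' hφ.involutive.injective
    (fun e he => hφ.supp_apply hs hb hb' (hCE he)) hC hind
  have h₂ := hb'.inter_eq_empty_of_indep_image hfin hs hb hφ.involutive.injective
    (fun e he => hφ.symm.supp_apply hs hb' hb (hCE he)) hC hind
  have hfix : φ '' C = C := by
    conv_rhs => rw [← image_id C]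
    exact image_congr fun e he => hφ.apply_of_notMem e (fun h => h₁.subset ⟨he, h⟩)
      (fun h => h₂.subset ⟨he, h⟩)
  exact hC.not_indep (hfix ▸ hind)

lemma indep_image (hφ : IsCremonaSwap M b b' φ) (hfin : M.E.Finite) (hs : MSimple M)
    (hb : IsCremonaBasis M b) (hb' : IsCremonaBasis M b') (hI : M.Indep I) :
    M.Indep (φ '' I) := by
  by_contra hdep
  obtain ⟨C, hCI, hC⟩ := ((not_indep_iff ((hφ.mapsTo hb hb').image_subset.trans'
    (image_mono hI.subset_ground))).1 hdep).exists_isCircuit_subset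
  refine hφ.not_indep_image_of_isCircuit hfin hs hb hb' hC (hI.subset ?_)
  exact (image_mono hCI).trans (hφ.involutive.leftInverse.image_image I).subset

lemma indep_image_iff (hφ : IsCremonaSwap M b b' φ) (hfin : M.E.Finite) (hs : MSimple M)
    (hb : IsCremonaBasis M b) (hb' : IsCremonaBasis M b') : M.Indep (φ '' I) ↔ M.Indep I :=
  ⟨fun h => hφ.involutive.leftInverse.image_image I ▸ hφ.indep_image hfin hs hb hb' h,
    hφ.indep_image hfin hs hb hb'⟩

end IsCremonaSwap

theorem stmt10_general (M : Matroid α) (hfin : M.E.Finite) (hsimple : MSimple M)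
    (hconn : MConnected M) (d : ℕ) (hd : 2 ≤ d) (hrk : mRank M M.E = d + 1)
    (b bs : Set α) (hb : IsCremonaBasis M b) (hbs : IsCremonaBasis M bs) :
    ∃ φ : α → α,
      Set.BijOn φ M.E M.E ∧
      (∀ x ∈ M.E, φ (φ x) = x) ∧
      (∀ I, I ⊆ M.E → (M.Indep I ↔ M.Indep (φ '' I))) ∧
      φ '' b = bs := by
  have hcard : 3 ≤ b.ncard := by
    rw [← mRank_eq_ncard hfin hb.1]
    omega
  have hφ := hb.isCremonaSwap_cremonaSwap hfin hsimple hconn hbs hcard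
  have hmaps := hφ.mapsTo hb hbs
  refine ⟨M.cremonaSwap b bs, Set.InvOn.bijOn ⟨fun x _ => hφ.involutive x,
    fun x _ => hφ.involutive x⟩ hmaps hmaps, fun x _ => hφ.involutive x,
    fun I _ => (hφ.indep_image_iff hfin hsimple hb hbs).symm, hφ.image_eq⟩

/-- If a simple connected matroid of rank `d+1 ≥ 3` has two different
Cremona bases `b` and `b*`, there is an involutive matroid automorphism mapping
`b` to `b*`. -/
theorem stmt10 (M : Matroid α) (hfin : M.E.Finite) (hsimple : MSimple M)
    (hconn : MConnected M) (d : ℕ) (hd : 2 ≤ d) (hrk : mRank M M.E = d + 1)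
    (b bs : Set α) (hb : IsCremonaBasis M b) (hbs : IsCremonaBasis M bs) (hne : b ≠ bs) :
    ∃ φ : α → α,
      Set.BijOn φ M.E M.E ∧
      (∀ x ∈ M.E, φ (φ x) = x) ∧
      (∀ I, I ⊆ M.E → (M.Indep I ↔ M.Indep (φ '' I))) ∧
      φ '' b = bs :=
  stmt10_general M hfin hsimple hconn d hd hrk b bs hb hbs
end

section
/- Let M be the matroid on ground set {x_i : 1 ≤ i ≤ n} ∪ {x_i + x_j, x_i − x_j : 1 ≤ i < j ≤ n} ⊆ ℝ^n realized by these vectors (the B_n root system matroid), with n ≥ 3. Then b = {x_1, ..., x_n} is the unique Cremona basis of M. -/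
open Set

variable {α : Type*}

/-- The set of positive roots of type `Bₙ`: the vectors `xᵢ` and `xᵢ ± xⱼ` (`i < j`). -/
def BnRoots (n : ℕ) : Set (Fin n → ℝ) :=
  {v | (∃ i, v = Pi.single i 1) ∨
    ∃ i j, i < j ∧ (v = Pi.single i 1 + Pi.single j 1 ∨ v = Pi.single i 1 - Pi.single j 1)}

/- A Cremona basis `b` is a base, so it has `n` elements, and the `n² - n` roots outside it are
split among the lines `F_{xy}`, `x ≠ y ∈ b`. Each plane meets `Bₙ` in at most four roots, so each
`F_{xy}` has at most two elements; counting, every `F_{xy}` has exactly two, i.e. every plane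
spanned by two elements of `b` contains four roots. Such a plane is supported on two coordinates.
If `b` contained a long root `xᵢ ± xⱼ`, every element of `b` would then vanish outside `{i, j}`,
which is impossible for a spanning set once `n ≥ 3`. -/

open Submodule

section LinearAlgebra

variable {K ι : Type*} [DivisionRing K]

lemma Matroid.closure_eq_inter_span {V : Type*} [AddCommGroup V] [Module K V] {M : Matroid V}
    (hM : ∀ I, M.Indep I ↔ I ⊆ M.E ∧ LinearIndepOn K id I) {I : Set V} (hI : M.Indep I) :
    M.closure I = M.E ∩ span K I := by
  ext v
  by_cases hvI : v ∈ I
  · simp [M.subset_closure I hI.subset_ground hvI, hI.subset_ground hvI, subset_span hvI]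
  rw [hI.mem_closure_iff_of_notMem hvI, Matroid.dep_iff, hM, insert_subset_iff,
    linearIndepOn_id_insert hvI, mem_inter_iff, SetLike.mem_coe]
  have := (hM I).1 hI
  tauto

lemma apply_eq_zero_of_linearIndependent_mem_span_pair {x y u w : ι → K}
    (hu : u ∈ span K {x, y}) (hw : w ∈ span K {x, y}) (huw : LinearIndependent K ![u, w])
    {k : ι} (huk : u k = 0) (hwk : w k = 0) : x k = 0 ∧ y k = 0 := by
  have hle : span K {u, w} ≤ span K {x, y} :=
    span_le.2 (insert_subset hu (singleton_subset_iff.2 hw))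
  have hrank : Module.finrank K (span K {x, y}) ≤ Module.finrank K (span K {u, w}) := by
    rw [← Matrix.range_cons_cons_empty x y ![], ← Matrix.range_cons_cons_empty u w ![],
      finrank_span_eq_card huw]
    exact finrank_range_le_card _
  have := FiniteDimensional.span_of_finite K (toFinite {x, y})
  have hspan := eq_of_le_of_finrank_le hle hrank
  have hzero : ∀ v ∈ span K {u, w}, v k = 0 := by
    intro v hv
    obtain ⟨a, b, rfl⟩ := mem_span_pair.1 hv
    simp [huk, hwk]
  exact ⟨hzero x (hspan ▸ subset_span (mem_insert x _)),
    hzero y (hspan ▸ subset_span (mem_insert_of_mem x rfl))⟩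

lemma mem_span_single_pair_iff [DecidableEq ι] {i j : ι} (hij : i ≠ j) (v : ι → K) :
    v ∈ span K {Pi.single i 1, Pi.single j 1} ↔ ∀ k, v k ≠ 0 → k = i ∨ k = j := by
  constructor
  · rintro hv k hk
    obtain ⟨a, c, rfl⟩ := mem_span_pair.1 hv
    by_contra! hkij
    simp [hkij.1, hkij.2] at hk
  · intro hv
    refine mem_span_pair.2 ⟨v i, v j, funext fun k => ?_⟩
    by_cases hki : k = i
    · subst hki; simp [hij]
    by_cases hkj : k = j
    · subst hkj; simp [Ne.symm hij]
    have hvk : v k = 0 := by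
      by_contra h
      exact (hv k h).elim hki hkj
    simp [hki, hkj, hvk]

lemma range_basisFun_eq (η : Type*) [Finite η] [DecidableEq η] :
    range (Pi.basisFun K η) = {v | ∃ i, v = Pi.single i 1} := by
  ext v; simp [eq_comm]

open Finset

variable [Fintype ι] [DecidableEq K]

def jointSupport (x y : ι → K) : Finset ι := {k | x k ≠ 0 ∨ y k ≠ 0}

/- Two independent vectors of `span {x, y}` have no common zero in `jointSupport x y`, while each
`f a` vanishes on all but at most two of its coordinates. -/
lemma card_mul_sub_two_le_card_jointSupport {σ : Type*} (S : Finset σ) (f : σ → ι → K)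
    {x y : ι → K} (hspan : ∀ a ∈ S, f a ∈ span K {x, y})
    (hindep : ∀ a ∈ S, ∀ b ∈ S, a ≠ b → LinearIndependent K ![f a, f b])
    (hsupp : ∀ a ∈ S, #{k | f a k ≠ 0} ≤ 2) :
    #S * (#(jointSupport x y) - 2) ≤ #(jointSupport x y) := by
  classical
  set T := jointSupport x y
  set Z : σ → Finset ι := fun a => T.filter (f a · = 0) with hZ
  have hcardZ : ∀ a ∈ S, #T - 2 ≤ #(Z a) := by
    intro a ha
    have hsplit := card_filter_add_card_filter_not (s := T) (fun k => f a k = 0)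
    have hnz : #(T.filter (fun k => ¬ f a k = 0)) ≤ 2 :=
      (Finset.card_le_card (monotone_filter_left _ (subset_univ T))).trans (hsupp a ha)
    simp only [hZ]
    omega
  have hdisj : (S : Set σ).PairwiseDisjoint Z := by
    intro a ha b hb hab
    refine Finset.disjoint_left.2 fun k hka hkb => ?_
    simp only [Z, T, jointSupport, mem_filter, Finset.mem_univ, true_and] at hka hkb
    have := apply_eq_zero_of_linearIndependent_mem_span_pair (hspan a ha) (hspan b hb)
      (hindep a ha b hb hab) hka.2 hkb.2
    tauto
  calc #S * (#T - 2) ≤ ∑ a ∈ S, #(Z a) := by simpa using card_nsmul_le_sum S _ _ hcardZ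
    _ = #(S.biUnion Z) := (card_biUnion hdisj).symm
    _ ≤ #T := Finset.card_le_card (biUnion_subset.2 fun a _ => filter_subset _ _)

end LinearAlgebra

section CremonaBasis

variable {M : Matroid α} {b : Set α}

lemma Fij_comm (M : Matroid α) (x y : α) : Fij M x y = Fij M y x := by
  rw [Fij, Fij, pair_comm]

lemma IsCremonaBasis.Fij_subset (hb : IsCremonaBasis M b) {x y : α} (hx : x ∈ b) (hy : y ∈ b)
    (hxy : x ≠ y) : Fij M x y ⊆ M.E \ b :=
  fun _ hu => hb.2.2 ▸ mem_iUnion₂.2 ⟨x, hx, mem_iUnion₂.2 ⟨y, hy, mem_iUnion.2 ⟨hxy, hu⟩⟩⟩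

lemma IsCremonaBasis.exists_unique_pair_mem_Fij (hb : IsCremonaBasis M b) {u : α}
    (hu : u ∈ M.E \ b) : ∃ a c, a ≠ c ∧ ∀ x y,
      (x ∈ b ∧ y ∈ b ∧ x ≠ y) ∧ u ∈ Fij M x y ↔ (x = a ∧ y = c) ∨ (x = c ∧ y = a) := by
  simp only [← hb.2.2, mem_iUnion] at hu
  obtain ⟨a, ha, c, hc, hac, hu⟩ := hu
  refine ⟨a, c, hac, fun x y => ⟨fun ⟨⟨hx, hy, hxy⟩, hu'⟩ => ?_, ?_⟩⟩
  · by_contra hne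
    refine disjoint_left.1 (hb.2.1 x hx y hy a ha c hc hxy hac fun h => hne ?_) hu' hu
    exact pair_eq_pair_iff.1 h
  · rintro (⟨rfl, rfl⟩ | ⟨rfl, rfl⟩)
    · exact ⟨⟨ha, hc, hac⟩, hu⟩
    · exact ⟨⟨hc, ha, hac.symm⟩, by rwa [Fij_comm]⟩

open Finset in
/- Double counting of the incidences `u ∈ Fij M x y` over ordered pairs `(x, y)`: every
`u ∈ M.E \ b` is counted exactly twice. -/
lemma IsCremonaBasis.ncard_Fij_eq_two (hb : IsCremonaBasis M b) (hfin : M.E.Finite)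
    (hle : ∀ x ∈ b, ∀ y ∈ b, x ≠ y → (Fij M x y).ncard ≤ 2)
    (hcard : b.ncard * (b.ncard - 1) ≤ (M.E \ b).ncard) {x y : α} (hx : x ∈ b) (hy : y ∈ b)
    (hxy : x ≠ y) : (Fij M x y).ncard = 2 := by
  classical
  have hbfin := hfin.subset hb.1.subset_ground
  set B := hbfin.toFinset
  set U := (hfin.sdiff (t := b)).toFinset
  let r : α × α → α → Prop := fun p u => u ∈ Fij M p.1 p.2
  have habove : ∀ p ∈ B.offDiag, #(U.bipartiteAbove r p) = (Fij M p.1 p.2).ncard := by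
    rintro ⟨a, c⟩ hp
    simp only [Finset.mem_offDiag, B, Set.Finite.mem_toFinset] at hp
    rw [← Set.ncard_coe_finset]
    congr 1
    ext u
    simp only [bipartiteAbove, coe_filter, U, Set.Finite.mem_toFinset, Set.mem_ofPred_eq, r]
    exact ⟨And.right, fun hu => ⟨hb.Fij_subset hp.1 hp.2.1 hp.2.2 hu, hu⟩⟩
  have habove_le : ∀ p ∈ B.offDiag, #(U.bipartiteAbove r p) ≤ 2 := by
    intro p hp
    rw [habove p hp]
    simp only [Finset.mem_offDiag, B, Set.Finite.mem_toFinset] at hp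
    exact hle _ hp.1 _ hp.2.1 hp.2.2
  have hbelow : ∀ u ∈ U, #(B.offDiag.bipartiteBelow r u) = 2 := by
    intro u hu
    obtain ⟨a, c, hac, hpair⟩ := hb.exists_unique_pair_mem_Fij (by simpa [U] using hu)
    have : B.offDiag.bipartiteBelow r u = {(a, c), (c, a)} := by
      ext ⟨x, y⟩
      simpa [bipartiteBelow, B, r] using hpair x y
    rw [this, card_pair (by simp [hac])]
  have hsum : ∑ p ∈ B.offDiag, #(U.bipartiteAbove r p) = ∑ p ∈ B.offDiag, 2 := by
    refine le_antisymm (sum_le_sum habove_le) ?_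
    rw [sum_card_bipartiteAbove_eq_sum_card_bipartiteBelow, sum_congr rfl hbelow]
    rw [Set.ncard_eq_toFinset_card b hbfin, Set.ncard_eq_toFinset_card _ hfin.sdiff] at hcard
    simpa only [sum_const, smul_eq_mul, offDiag_card, ← Nat.mul_sub_one] using
      Nat.mul_le_mul_right 2 hcard
  have hp : (x, y) ∈ B.offDiag := by simpa [B] using ⟨hx, hy, hxy⟩
  rw [← habove _ hp]
  exact (sum_eq_sum_iff_of_le habove_le).1 hsum _ hp

end CremonaBasis

section Roots

variable {n : ℕ}

/- The roots are indexed by `Fin n × Fin n`: `(i, i) ↦ xᵢ`, `(i, j) ↦ xᵢ + xⱼ` for `i < j`, and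
`(j, i) ↦ xᵢ - xⱼ` for `i < j`. -/
noncomputable def bnRoot (p : Fin n × Fin n) : Fin n → ℝ := fun k =>
  if k = p.1 then (if p.2 < p.1 then -1 else 1) else if k = p.2 then 1 else 0

lemma bnRoot_ne_zero_iff {p : Fin n × Fin n} {k : Fin n} :
    bnRoot p k ≠ 0 ↔ k = p.1 ∨ k = p.2 := by
  unfold bnRoot; split_ifs <;> simp_all

lemma bnRoot_ne_zero (p : Fin n × Fin n) : bnRoot p ≠ 0 :=
  fun h => bnRoot_ne_zero_iff.2 (Or.inl rfl) (congrFun h p.1)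

lemma bnRoot_injective : Function.Injective (bnRoot (n := n)) := by
  rintro ⟨a, b⟩ ⟨c, d⟩ h
  have hs : ∀ k, (k = a ∨ k = b) ↔ (k = c ∨ k = d) := fun k => by
    rw [← bnRoot_ne_zero_iff (p := (a, b)), congrFun h k, bnRoot_ne_zero_iff]
  have ha := congrFun h a
  have hb := congrFun h b
  simp only [bnRoot] at ha hb
  have := hs a; have := hs b; have := hs c; have := hs d
  grind

lemma bnRoot_apply_min (p : Fin n × Fin n) : bnRoot p (min p.1 p.2) = 1 := by
  unfold bnRoot; split_ifs <;> grind

lemma bnRoot_apply_of_lt_min {p : Fin n × Fin n} {k : Fin n} (hk : k < min p.1 p.2) :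
    bnRoot p k = 0 := by
  rw [← not_ne_iff, bnRoot_ne_zero_iff]; grind

lemma eq_one_of_smul_bnRoot_eq {c : ℝ} {p q : Fin n × Fin n} (h : c • bnRoot p = bnRoot q) :
    c = 1 := by
  have hm := congrFun h (min p.1 p.2)
  have hm' := congrFun h (min q.1 q.2)
  simp only [Pi.smul_apply, smul_eq_mul, bnRoot_apply_min] at hm hm'
  rcases lt_trichotomy (min p.1 p.2) (min q.1 q.2) with hlt | heq | hgt
  · rw [bnRoot_apply_of_lt_min hlt, mul_one] at hm
    rw [hm, zero_mul] at hm'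
    exact absurd hm' zero_ne_one
  · rwa [heq, bnRoot_apply_min, mul_one] at hm
  · rw [bnRoot_apply_of_lt_min hgt, mul_zero] at hm'
    exact absurd hm' zero_ne_one

lemma smul_bnRoot_ne {p q : Fin n × Fin n} (hpq : p ≠ q) (c : ℝ) : c • bnRoot p ≠ bnRoot q := by
  intro h
  rw [eq_one_of_smul_bnRoot_eq h, one_smul] at h
  exact hpq (bnRoot_injective h)

lemma bnRoot_self (i : Fin n) : bnRoot (i, i) = Pi.single i 1 := by
  ext k; simp [bnRoot, Pi.single_apply]

lemma bnRoot_of_lt {i j : Fin n} (h : i < j) : bnRoot (i, j) = Pi.single i 1 + Pi.single j 1 := by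
  ext k; simp only [bnRoot, Pi.add_apply, Pi.single_apply]; split_ifs <;> grind

lemma bnRoot_of_gt {i j : Fin n} (h : i < j) : bnRoot (j, i) = Pi.single i 1 - Pi.single j 1 := by
  ext k; simp only [bnRoot, Pi.sub_apply, Pi.single_apply]; split_ifs <;> grind

lemma range_bnRoot : range (bnRoot (n := n)) = BnRoots n := by
  ext v
  constructor
  · rintro ⟨⟨a, c⟩, rfl⟩
    rcases lt_trichotomy a c with h | rfl | h
    · exact Or.inr ⟨a, c, h, Or.inl (bnRoot_of_lt h)⟩
    · exact Or.inl ⟨a, bnRoot_self a⟩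
    · exact Or.inr ⟨c, a, h, Or.inr (bnRoot_of_gt h)⟩
  · rintro (⟨i, rfl⟩ | ⟨i, j, h, rfl | rfl⟩)
    · exact ⟨(i, i), bnRoot_self i⟩
    · exact ⟨(i, j), bnRoot_of_lt h⟩
    · exact ⟨(j, i), bnRoot_of_gt h⟩

lemma ncard_BnRoots : (BnRoots n).ncard = n * n := by
  rw [← range_bnRoot, ncard_range_of_injective bnRoot_injective, Nat.card_eq_fintype_card,
    Fintype.card_prod, Fintype.card_fin]

lemma bnRoot_mem_span_single_pair {i j : Fin n} (hij : i ≠ j) (p : Fin n × Fin n) :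
    bnRoot p ∈ span ℝ {Pi.single i 1, Pi.single j 1} ↔
      (p.1 = i ∨ p.1 = j) ∧ (p.2 = i ∨ p.2 = j) := by
  simp only [mem_span_single_pair_iff hij, bnRoot_ne_zero_iff, forall_eq_or_imp, forall_eq]

open Finset

open Classical in
noncomputable def planeRoots (x y : Fin n → ℝ) : Finset (Fin n × Fin n) :=
  {p | bnRoot p ∈ span ℝ {x, y}}

lemma mem_planeRoots {x y : Fin n → ℝ} {p : Fin n × Fin n} :
    p ∈ planeRoots x y ↔ bnRoot p ∈ span ℝ {x, y} := by
  simp [planeRoots]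

lemma card_planeRoots_mul_le (x y : Fin n → ℝ) :
    #(planeRoots x y) * (#(jointSupport x y) - 2) ≤ #(jointSupport x y) := by
  refine card_mul_sub_two_le_card_jointSupport _ bnRoot (fun _ hp => mem_planeRoots.1 hp)
    (fun p _ _ _ hpq => (LinearIndependent.pair_iff' (bnRoot_ne_zero p)).2 (smul_bnRoot_ne hpq))
    (fun p _ => ?_)
  simp only [bnRoot_ne_zero_iff]
  exact (Finset.card_le_card fun k hk => by simpa using hk).trans card_le_two

lemma planeRoots_subset (x y : Fin n → ℝ) :
    planeRoots x y ⊆ jointSupport x y ×ˢ jointSupport x y := by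
  intro p hp
  obtain ⟨a, c, hac⟩ := mem_span_pair.1 (mem_planeRoots.1 hp)
  have hsupp : ∀ k, k = p.1 ∨ k = p.2 → k ∈ jointSupport x y := by
    intro k hk
    by_contra hkT
    simp only [jointSupport, mem_filter, Finset.mem_univ, true_and, not_or, not_not] at hkT
    apply bnRoot_ne_zero_iff.2 hk
    simp [← hac, hkT.1, hkT.2]
  exact mem_product.2 ⟨hsupp _ (Or.inl rfl), hsupp _ (Or.inr rfl)⟩

lemma card_planeRoots_le_four (x y : Fin n → ℝ) : #(planeRoots x y) ≤ 4 := by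
  have h1 := card_planeRoots_mul_le x y
  have h2 := (Finset.card_le_card (planeRoots_subset x y)).trans_eq (card_product _ _)
  generalize #(planeRoots x y) = s at h1 h2
  generalize #(jointSupport x y) = t at h1 h2
  rcases le_or_gt t 2 with h | h
  · nlinarith
  · obtain ⟨u, rfl⟩ : ∃ u, t = u + 3 := ⟨t - 3, by omega⟩
    rw [show u + 3 - 2 = u + 1 by omega] at h1
    nlinarith

lemma card_jointSupport_le_two {x y : Fin n → ℝ} (h : 4 ≤ #(planeRoots x y)) :
    #(jointSupport x y) ≤ 2 := by
  have := (Nat.mul_le_mul_right _ h).trans (card_planeRoots_mul_le x y)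
  omega

end Roots

section BnMatroid

variable {n : ℕ} {M : Matroid (Fin n → ℝ)} {b : Set (Fin n → ℝ)}

lemma subset_range_bnRoot (hE : M.E = BnRoots n) {X : Set (Fin n → ℝ)} (hX : X ⊆ M.E) :
    X ⊆ range bnRoot :=
  range_bnRoot ▸ hE ▸ hX

lemma closure_pair_bnRoot (hE : M.E = BnRoots n)
    (hM : ∀ I, M.Indep I ↔ I ⊆ M.E ∧ LinearIndepOn ℝ id I) {p q : Fin n × Fin n} (hpq : p ≠ q) :
    M.closure {bnRoot p, bnRoot q} = bnRoot '' planeRoots (bnRoot p) (bnRoot q) := by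
  have hI : M.Indep {bnRoot p, bnRoot q} := (hM _).2 ⟨by
    rw [hE, ← range_bnRoot]; exact pair_subset (mem_range_self p) (mem_range_self q),
    linearIndepOn_id_pair (bnRoot_ne_zero p) (smul_bnRoot_ne hpq)⟩
  rw [Matroid.closure_eq_inter_span hM hI, hE, ← range_bnRoot]
  ext v
  constructor
  · rintro ⟨⟨r, rfl⟩, hr⟩
    exact ⟨r, mem_planeRoots.2 hr, rfl⟩
  · rintro ⟨r, hr, rfl⟩
    exact ⟨mem_range_self r, mem_planeRoots.1 hr⟩

lemma ncard_Fij_bnRoot (hE : M.E = BnRoots n)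
    (hM : ∀ I, M.Indep I ↔ I ⊆ M.E ∧ LinearIndepOn ℝ id I) {p q : Fin n × Fin n} (hpq : p ≠ q) :
    (Fij M (bnRoot p) (bnRoot q)).ncard = (planeRoots (bnRoot p) (bnRoot q)).card - 2 := by
  have hsub : {bnRoot p, bnRoot q} ⊆ bnRoot '' planeRoots (bnRoot p) (bnRoot q) :=
    pair_subset (mem_image_of_mem _ (mem_planeRoots.2 (subset_span (mem_insert _ _))))
      (mem_image_of_mem _ (mem_planeRoots.2 (subset_span (mem_insert_of_mem _ rfl))))
  rw [Fij, closure_pair_bnRoot hE hM hpq, ncard_sdiff hsub,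
    ncard_image_of_injective _ bnRoot_injective, ncard_coe_finset,
    ncard_pair (bnRoot_injective.ne hpq)]

lemma Fij_single (hE : M.E = BnRoots n)
    (hM : ∀ I, M.Indep I ↔ I ⊆ M.E ∧ LinearIndepOn ℝ id I) {i j : Fin n} (hij : i ≠ j) :
    Fij M (Pi.single i 1) (Pi.single j 1) = {bnRoot (i, j), bnRoot (j, i)} := by
  have hij' : (i, i) ≠ (j, j) := by simpa using hij
  rw [← bnRoot_self i, ← bnRoot_self j, Fij, closure_pair_bnRoot hE hM hij']
  ext v
  simp only [mem_sdiff, mem_image, Finset.mem_coe, mem_planeRoots, bnRoot_self,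
    bnRoot_mem_span_single_pair hij, mem_insert_iff, mem_singleton_iff]
  constructor
  · rintro ⟨⟨⟨a, c⟩, hac, rfl⟩, hne⟩
    simp only [← bnRoot_self, bnRoot_injective.eq_iff, Prod.mk.injEq] at hne ⊢
    grind
  · rintro (rfl | rfl)
    · refine ⟨⟨(i, j), by simp, rfl⟩, ?_⟩
      simp only [← bnRoot_self, bnRoot_injective.eq_iff, Prod.mk.injEq]
      grind
    · refine ⟨⟨(j, i), by simp, rfl⟩, ?_⟩
      simp only [← bnRoot_self, bnRoot_injective.eq_iff, Prod.mk.injEq]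
      grind

lemma isBase_single (hE : M.E = BnRoots n)
    (hM : ∀ I, M.Indep I ↔ I ⊆ M.E ∧ LinearIndepOn ℝ id I) :
    M.IsBase {v | ∃ i : Fin n, v = Pi.single i 1} := by
  rw [← range_basisFun_eq]
  have hI : M.Indep (range (Pi.basisFun ℝ (Fin n))) := (hM _).2 ⟨by
    rw [hE, range_basisFun_eq]; exact fun v hv => Or.inl hv,
    (linearIndepOn_id_range_iff (Pi.basisFun ℝ (Fin n)).injective).2
      (Pi.basisFun ℝ (Fin n)).linearIndependent⟩
  refine hI.isBase_of_ground_subset_closure ?_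
  rw [Matroid.closure_eq_inter_span hM hI, (Pi.basisFun ℝ (Fin n)).span_eq]
  simp

lemma isCremonaBasis_single (hE : M.E = BnRoots n)
    (hM : ∀ I, M.Indep I ↔ I ⊆ M.E ∧ LinearIndepOn ℝ id I) :
    IsCremonaBasis M {v | ∃ i : Fin n, v = Pi.single i 1} := by
  refine ⟨isBase_single hE hM, ?_, ?_⟩
  · rintro _ ⟨i, rfl⟩ _ ⟨j, rfl⟩ _ ⟨k, rfl⟩ _ ⟨l, rfl⟩ hij hkl hne
    rw [Fij_single hE hM (by rintro rfl; exact hij rfl),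
      Fij_single hE hM (by rintro rfl; exact hkl rfl), disjoint_iff_forall_ne]
    rintro _ (rfl | rfl) _ (rfl | rfl) h <;>
      obtain ⟨rfl, rfl⟩ := Prod.mk.inj (bnRoot_injective h) <;> simp [pair_comm] at hne
  · ext v
    simp only [mem_iUnion, mem_sdiff, mem_ofPred_eq, hE]
    constructor
    · rintro ⟨_, ⟨i, rfl⟩, _, ⟨j, rfl⟩, hij, hv⟩
      have hij : i ≠ j := by rintro rfl; exact hij rfl
      rw [Fij_single hE hM hij] at hv
      refine ⟨?_, ?_⟩
      · rw [← range_bnRoot]; rcases hv with rfl | rfl <;> exact mem_range_self _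
      · rintro ⟨m, hm⟩
        rw [← bnRoot_self] at hm
        rcases hv with rfl | rfl <;> simp_all [bnRoot_injective.eq_iff]
    · rintro ⟨hv, hvb⟩
      rw [← range_bnRoot] at hv
      obtain ⟨⟨i, j⟩, rfl⟩ := hv
      have hij : i ≠ j := by
        rintro rfl; exact hvb ⟨i, bnRoot_self i⟩
      exact ⟨_, ⟨i, rfl⟩, _, ⟨j, rfl⟩,
        fun h => hij ((Pi.basisFun ℝ (Fin n)).injective (by simpa using h)),
        (Fij_single hE hM hij).symm ▸ mem_insert _ _⟩

lemma ncard_Fij_eq_two_of_isCremonaBasis (hE : M.E = BnRoots n)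
    (hM : ∀ I, M.Indep I ↔ I ⊆ M.E ∧ LinearIndepOn ℝ id I) (hb : IsCremonaBasis M b)
    {x y : Fin n → ℝ} (hx : x ∈ b) (hy : y ∈ b) (hxy : x ≠ y) : (Fij M x y).ncard = 2 := by
  have hfin : M.E.Finite := hE ▸ range_bnRoot ▸ finite_range _
  have hbE := subset_range_bnRoot hE hb.1.subset_ground
  have hncard : b.ncard = n := by
    rw [hb.1.ncard_eq_ncard_of_isBase (isBase_single hE hM), ← range_basisFun_eq,
      ncard_range_of_injective (Pi.basisFun ℝ (Fin n)).injective, Nat.card_eq_fintype_card,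
      Fintype.card_fin]
  refine hb.ncard_Fij_eq_two hfin (fun x hx y hy hxy => ?_) ?_ hx hy hxy
  · obtain ⟨p, rfl⟩ := hbE hx
    obtain ⟨q, rfl⟩ := hbE hy
    rw [ncard_Fij_bnRoot hE hM (by rintro rfl; exact hxy rfl)]
    have := card_planeRoots_le_four (bnRoot p) (bnRoot q)
    omega
  · rw [ncard_sdiff hb.1.subset_ground (hfin.subset hb.1.subset_ground), hncard, hE,
      ncard_BnRoots, Nat.mul_sub_one]

lemma apply_eq_zero_of_isCremonaBasis (hE : M.E = BnRoots n)
    (hM : ∀ I, M.Indep I ↔ I ⊆ M.E ∧ LinearIndepOn ℝ id I) (hb : IsCremonaBasis M b)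
    {i j k : Fin n} (hij : i ≠ j) (hk : k ∉ ({i, j} : Finset (Fin n))) (hx : bnRoot (i, j) ∈ b)
    {y : Fin n → ℝ} (hy : y ∈ b) : y k = 0 := by
  have hbE := subset_range_bnRoot hE hb.1.subset_ground
  obtain ⟨q, rfl⟩ := hbE hy
  by_contra hqk
  by_cases hq : (i, j) = q
  · subst hq; exact hk (by simpa using bnRoot_ne_zero_iff.1 hqk)
  have hF := ncard_Fij_eq_two_of_isCremonaBasis hE hM hb hx hy (bnRoot_injective.ne hq)
  rw [ncard_Fij_bnRoot hE hM hq] at hF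
  have hT := card_jointSupport_le_two (x := bnRoot (i, j)) (y := bnRoot q) (by omega)
  have hsub : {i, j} ⊆ jointSupport (bnRoot (i, j)) (bnRoot q) := by
    intro m hm
    simp only [Finset.mem_insert, Finset.mem_singleton] at hm
    simp [jointSupport, bnRoot_ne_zero_iff, hm]
  have heq := Finset.eq_of_subset_of_card_le hsub (hT.trans (Finset.card_pair hij).ge)
  exact hk (heq ▸ by simp [jointSupport, hqk])

lemma mem_single_of_isCremonaBasis (hn : 3 ≤ n) (hE : M.E = BnRoots n)
    (hM : ∀ I, M.Indep I ↔ I ⊆ M.E ∧ LinearIndepOn ℝ id I) (hb : IsCremonaBasis M b)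
    {x : Fin n → ℝ} (hx : x ∈ b) : ∃ i, x = Pi.single i 1 := by
  have hbE := subset_range_bnRoot hE hb.1.subset_ground
  obtain ⟨⟨i, j⟩, rfl⟩ := hbE hx
  rcases eq_or_ne i j with rfl | hij
  · exact ⟨i, bnRoot_self i⟩
  exfalso
  obtain ⟨k, -, hk⟩ := Finset.exists_mem_notMem_of_card_lt_card (s := {i, j}) (t := Finset.univ)
    (Finset.card_le_two.trans_lt (by rw [Finset.card_univ, Fintype.card_fin]; omega))
  have hspan : Pi.single k 1 ∈ span ℝ b := by
    have : Pi.single k (1 : ℝ) ∈ M.closure b := hb.1.closure_eq ▸ hE ▸ Or.inl ⟨k, rfl⟩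
    rw [Matroid.closure_eq_inter_span hM hb.1.indep] at this
    exact this.2
  have hle : span ℝ b ≤ LinearMap.ker (LinearMap.proj k) :=
    span_le.2 fun y hy => apply_eq_zero_of_isCremonaBasis hE hM hb hij hk hx hy
  simpa using hle hspan

end BnMatroid

/-- For `n ≥ 3`, the `Bₙ` root-system matroid has
`{x₁, ..., xₙ}` as its unique Cremona basis. -/
theorem stmt12 (n : ℕ) (hn : 3 ≤ n) (M : Matroid (Fin n → ℝ))
    (hE : M.E = BnRoots n)
    (hind : ∀ I, M.Indep I ↔ I ⊆ BnRoots n ∧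
      LinearIndependent ℝ (fun v : I => (v : Fin n → ℝ))) :
    ∀ b, IsCremonaBasis M b ↔ b = {v | ∃ i : Fin n, v = Pi.single i 1} := by
  have hM : ∀ I, M.Indep I ↔ I ⊆ M.E ∧ LinearIndepOn ℝ id I := hE ▸ hind
  intro b
  constructor
  · intro hb
    exact hb.1.eq_of_subset_isBase (isBase_single hE hM) fun x hx =>
      mem_single_of_isCremonaBasis hn hE hM hb hx
  · rintro rfl
    exact isCremonaBasis_single hE hM
end

section
/- The linear map φ on ℝ^7/ℝ𝟙 induced by sending v_1 ↦ v_{{2,3,5}}, v_2 ↦ v_{{1,3,6}}, v_3 ↦ v_{{1,2,4}}, v_4 ↦ v_{{3,4,7}}, v_5 ↦ v_{{1,5,7}}, v_6 ↦ v_{{2,6,7}}, v_7 ↦ v_{{4,5,6}} (where v_T = Σ_{k∈T} v_k), written with respect to the basis v_1,...,v_6 of ℝ^7/ℝ𝟙, has determinant −8; in particular φ does not arise from a lattice automorphism of ℤ^7/ℤ𝟙. -/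
open Set Submodule

/-- The images of the seven basis vectors: the rank-2 flats of the Fano matroid
(with indices shifted down by one, so that `vₖ` corresponds to index `k-1`). -/
def fanoFlat : Fin 7 → Finset (Fin 7) :=
  ![{1, 2, 4}, {0, 2, 5}, {0, 1, 3}, {2, 3, 6}, {0, 4, 6}, {1, 5, 6}, {3, 4, 5}]

/-- The 7×7 matrix of the lift of `φ`, sending `vⱼ` to `v_{Tⱼ}`, the indicator vector
of the corresponding rank-2 flat. -/
def fanoMat : Matrix (Fin 7) (Fin 7) ℝ := fun i j => if i ∈ fanoFlat j then 1 else 0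

/-- The quotient `ℝ⁷/ℝ𝟙`. -/
abbrev QR := (Fin 7 → ℝ) ⧸ (span ℝ {(fun _ => (1 : ℝ) : Fin 7 → ℝ)})

/-- The lattice quotient `ℤ⁷/ℤ𝟙`. -/
abbrev QZ := (Fin 7 → ℤ) ⧸ (span ℤ {(fun _ => (1 : ℤ) : Fin 7 → ℤ)})

/-- Coordinatewise cast `ℤ⁷ → ℝ⁷`. -/
def castPi : (Fin 7 → ℤ) →ₗ[ℤ] (Fin 7 → ℝ) where
  toFun z i := (z i : ℝ)
  map_add' x y := by funext i; simp
  map_smul' c x := by funext i; simp [Pi.smul_apply]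

/-- The induced map `ℤ⁷/ℤ𝟙 → ℝ⁷/ℝ𝟙`. -/
noncomputable def iotaZR : QZ →ₗ[ℤ] QR :=
  Submodule.liftQ _
    (((span ℝ {(fun _ => (1 : ℝ) : Fin 7 → ℝ)}).mkQ.restrictScalars ℤ).comp castPi)
    (by
      rw [Submodule.span_le]
      rintro x hx
      rw [Set.mem_singleton_iff] at hx
      subst hx
      simp only [SetLike.mem_coe, LinearMap.mem_ker, LinearMap.comp_apply,
        LinearMap.coe_restrictScalars, Submodule.mkQ_apply]
      have h1 : castPi (fun _ => (1 : ℤ)) = fun _ => (1 : ℝ) := by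
        funext i; simp [castPi]
      rw [h1, Submodule.Quotient.mk_eq_zero]
      exact Submodule.subset_span rfl)

/-!
The coordinates `xᵢ - x₇` (`i ≤ 6`) identify `R⁷/R𝟙` with `R⁶` over any commutative ring, so the
classes of `v₁, …, v₆` form a basis both of `ℝ⁷/ℝ𝟙` and of the lattice `ℤ⁷/ℤ𝟙`, and the inclusion
of the lattice respects these coordinates. In them `φ` is an explicit integer matrix of
determinant `-8`. A lattice automorphism `ψ` lifting `φ` would have the same matrix, whereas the
matrix of an automorphism of a free `ℤ`-module has determinant `±1`.
-/

/-- `Rⁿ⁺¹/R𝟙`; `QR` and `QZ` are the cases `n = 6` with `R = ℝ` and `R = ℤ`. -/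
abbrev ConstQuot (R : Type*) [CommRing R] (n : ℕ) : Type _ :=
  (Fin (n + 1) → R) ⧸ span R {(fun _ => (1 : R) : Fin (n + 1) → R)}

namespace ConstQuot

variable (R : Type*) [CommRing R] (n : ℕ)

def lastDiff : (Fin (n + 1) → R) →ₗ[R] (Fin n → R) where
  toFun x i := x i.castSucc - x (Fin.last n)
  map_add' _ _ := funext fun _ => add_sub_add_comm ..
  map_smul' _ _ := funext fun _ => (mul_sub ..).symm

variable {R n}

@[simp]
lemma lastDiff_apply (x : Fin (n + 1) → R) (i : Fin n) :
    lastDiff R n x i = x i.castSucc - x (Fin.last n) := rfl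

variable (R n)

lemma ker_lastDiff :
    LinearMap.ker (lastDiff R n) = span R {(fun _ => (1 : R) : Fin (n + 1) → R)} := by
  ext x
  simp only [LinearMap.mem_ker, mem_span_singleton, funext_iff, lastDiff_apply,
    Pi.zero_apply, sub_eq_zero]
  constructor
  · intro h
    refine ⟨x (Fin.last n), fun j => ?_⟩
    induction j using Fin.lastCases with
    | last => simp
    | cast i => simp [h i]
  · rintro ⟨c, hc⟩ i
    simp [← hc]

lemma lastDiff_surjective : Function.Surjective (lastDiff R n) := fun v =>
  ⟨Fin.snoc v 0, funext fun i => by simp⟩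

noncomputable def equiv : ConstQuot R n ≃ₗ[R] (Fin n → R) :=
  (quotEquivOfEq _ _ (ker_lastDiff R n).symm).trans
    ((lastDiff R n).quotKerEquivOfSurjective (lastDiff_surjective R n))

variable {R n}

@[simp]
lemma equiv_mk (x : Fin (n + 1) → R) : equiv R n (Submodule.Quotient.mk x) = lastDiff R n x :=
  rfl

lemma equiv_mk_single (i : Fin n) :
    equiv R n (Submodule.Quotient.mk (Pi.single i.castSucc 1)) = Pi.single i 1 := by
  ext j
  simp [Pi.single_apply, Fin.castSucc_ne_last]

variable (R n)

noncomputable def basis : Module.Basis (Fin n) R (ConstQuot R n) :=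
  .ofEquivFun (equiv R n)

variable {R n}

lemma basis_apply (i : Fin n) :
    basis R n i = Submodule.Quotient.mk (Pi.single i.castSucc 1) := by
  rw [basis, Module.Basis.coe_ofEquivFun, LinearEquiv.symm_apply_eq, equiv_mk_single]

lemma basis_repr (y : ConstQuot R n) (i : Fin n) : (basis R n).repr y i = equiv R n y i :=
  Module.Basis.ofEquivFun_repr_apply _ _ _

lemma eq_basis {B : Module.Basis (Fin n) R (ConstQuot R n)}
    (hB : ∀ i, B i = Submodule.Quotient.mk (Pi.single i.castSucc 1)) : B = basis R n :=
  Module.Basis.eq_of_apply_eq fun i => by rw [hB, basis_apply]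

lemma toMatrix_basis_of_mk {A : Matrix (Fin (n + 1)) (Fin (n + 1)) R}
    {φ : ConstQuot R n →ₗ[R] ConstQuot R n}
    (hφ : ∀ x, φ (Submodule.Quotient.mk x) = Submodule.Quotient.mk (A.mulVec x)) :
    LinearMap.toMatrix (basis R n) (basis R n) φ =
      Matrix.of fun i j => A i.castSucc j.castSucc - A (Fin.last n) j.castSucc := by
  ext i j
  simp [LinearMap.toMatrix_apply, basis_repr, basis_apply, hφ]

end ConstQuot

/-- The matrix of `φ` in the basis `v₁, …, v₆`: entry `(i, j)` is `[i ∈ Tⱼ] - [7 ∈ Tⱼ]`. -/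
def fanoQuotMatrix : Matrix (Fin 6) (Fin 6) ℤ :=
  !![0, 1, 1, -1, 0, -1;
     1, 0, 1, -1, -1, 0;
     1, 1, 0, 0, -1, -1;
     0, 0, 1, 0, -1, -1;
     1, 0, 0, -1, 0, -1;
     0, 1, 0, -1, -1, 0]

lemma det_fanoQuotMatrix : fanoQuotMatrix.det = -8 := by
  simp [fanoQuotMatrix, Matrix.det_succ_row_zero, Fin.sum_univ_succ, Fin.succAbove]

lemma fanoMat_sub_last_eq :
    (Matrix.of fun i j : Fin 6 => fanoMat i.castSucc j.castSucc - fanoMat (Fin.last 6) j.castSucc)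
      = fanoQuotMatrix.map Int.cast := by
  ext i j
  fin_cases i <;> fin_cases j <;> simp +decide [fanoMat, fanoFlat, fanoQuotMatrix]

lemma iotaZR_mk (z : Fin 7 → ℤ) :
    iotaZR (Submodule.Quotient.mk z) = Submodule.Quotient.mk (castPi z) := rfl

lemma equiv_iotaZR (w : QZ) :
    ConstQuot.equiv ℝ 6 (iotaZR w) = fun i => (ConstQuot.equiv ℤ 6 w i : ℝ) := by
  induction w using Submodule.Quotient.induction_on with
  | H z => funext i; simp [iotaZR_mk, castPi]

lemma iotaZR_basis (i : Fin 6) : iotaZR (ConstQuot.basis ℤ 6 i) = ConstQuot.basis ℝ 6 i := by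
  rw [ConstQuot.basis_apply, ConstQuot.basis_apply, iotaZR_mk]
  congr 1
  funext k
  simp [castPi, Pi.single_apply]

lemma toMatrix_eq_map_of_iotaZR_comp {φ : QR →ₗ[ℝ] QR} {ψ : QZ →ₗ[ℤ] QZ}
    (h : ∀ w, iotaZR (ψ w) = φ (iotaZR w)) :
    LinearMap.toMatrix (ConstQuot.basis ℝ 6) (ConstQuot.basis ℝ 6) φ =
      (LinearMap.toMatrix (ConstQuot.basis ℤ 6) (ConstQuot.basis ℤ 6) ψ).map Int.cast := by
  ext i j
  simp [LinearMap.toMatrix_apply, ConstQuot.basis_repr, ← iotaZR_basis, ← h, equiv_iotaZR]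

/-- The endomorphism `φ` of `ℝ⁷/ℝ𝟙` induced by `vₖ ↦ v_{Tₖ}` for the
rank-2 flats of the Fano matroid has determinant `-8` with respect to the basis
`v₁, ..., v₆`; in particular it does not arise from a lattice automorphism of `ℤ⁷/ℤ𝟙`. -/
theorem stmt14
    (φ : QR →ₗ[ℝ] QR)
    (hφ : ∀ x : Fin 7 → ℝ, φ (Submodule.Quotient.mk x) =
      Submodule.Quotient.mk (fanoMat.mulVec x))
    (B : Module.Basis (Fin 6) ℝ QR)
    (hB : ∀ i : Fin 6, B i = Submodule.Quotient.mk (Pi.single i.castSucc (1 : ℝ))) :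
    (LinearMap.toMatrix B B φ).det = -8 ∧
    ¬ ∃ ψ : QZ ≃ₗ[ℤ] QZ, ∀ w : QZ,
      iotaZR (ψ w) = (φ.restrictScalars ℤ) (iotaZR w) := by
  obtain rfl := ConstQuot.eq_basis hB
  have hdet :
      (LinearMap.toMatrix (ConstQuot.basis ℝ 6) (ConstQuot.basis ℝ 6) φ).det = -8 := by
    rw [ConstQuot.toMatrix_basis_of_mk hφ, fanoMat_sub_last_eq, ← Int.cast_det,
      det_fanoQuotMatrix]
    norm_num
  refine ⟨hdet, ?_⟩
  rintro ⟨ψ, hψ⟩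
  have hunit := Int.isUnit_iff.1
    (LinearEquiv.isUnit_det ψ (ConstQuot.basis ℤ 6) (ConstQuot.basis ℤ 6))
  rw [toMatrix_eq_map_of_iotaZR_comp (ψ := ψ.toLinearMap) hψ, ← Int.cast_det] at hdet
  rcases hunit with h | h <;> rw [h] at hdet <;> norm_num at hdet
end

section
/- Let M be a simple matroid with Cremona basis b, let E_+ = ⋃_{0 < i < j} F_{ij}, and suppose b* is a second Cremona basis with b ∩ b* = {b_0}. Then E_+ = cl(b \ {b_0}) ∩ cl(b* \ {b_0}); in particular E_+ is a flat of M. -/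
open Set

variable {α : Type*}

/-!
Write `H = cl (b \ {b0})`. In a simple matroid a point of a line `F_{ij}` of `b` lies in `H`
exactly when neither end is `b0`, since otherwise exchange puts `b0` into `H`. The heart of the
proof is that `bs` avoids `H`. Otherwise every element lies in `cl (bs ∩ H)` or in `cl (bs \ H)`:
for points of `b`, because a line of `bs` from `bs ∩ H` to `bs \ H` cannot meet `H` again; for the
other points, because a line of `b` and a line of `bs` through the same point, both crossing
between the two sides, would make a point of `b` parallel to a point of `bs ∩ H`. These two flats
spanned by disjoint parts of a base then separate `M`, contradicting connectivity. With `bs ∩ H`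
and symmetrically `b ∩ cl (bs \ {b0})` empty, both inclusions of `E₊ = H ∩ cl (bs \ {b0})` reduce
to the first observation.
-/
namespace Matroid

variable {M : Matroid α} {I J J₁ J₂ A B X X₁ X₂ : Set α} {e p q a c x y s : α}

lemma IsFlat.inter {F₁ F₂ : Set α} (hF₁ : M.IsFlat F₁) (hF₂ : M.IsFlat F₂) :
    M.IsFlat (F₁ ∩ F₂) := by
  rw [inter_eq_iInter]
  exact IsFlat.iInter fun i => by cases i <;> assumption

lemma notMem_closure_of_mem_closure_pair (hx : x ∈ M.closure {y, s}) (hxs : x ∉ M.closure {s})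
    (hs : s ∈ M.closure X) (hy : y ∉ M.closure X) : x ∉ M.closure X := fun hxX =>
  hy <| M.closure_subset_closure_of_subset_closure (pair_subset hxX hs) (mem_closure_insert hxs hx)

lemma Indep.union_indep_of_subset_closure_left (hIJ : M.Indep (I ∪ J)) (hdisj : Disjoint I J)
    (hA : M.Indep A) (hAI : A ⊆ M.closure I) : M.Indep (A ∪ J) := by
  refine (hA.union_indep_iff_forall_notMem_closure_right (hIJ.subset subset_union_right)).2
    fun e he hecl => hIJ.notMem_closure_sdiff_of_mem (.inr he.1) ?_
  rw [union_sdiff_distrib, sdiff_singleton_eq_self (hdisj.notMem_of_mem_right he.1)]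
  exact M.closure_subset_closure_of_subset_closure
    (union_subset (hAI.trans (M.closure_subset_closure subset_union_left))
      (M.subset_closure_of_subset' subset_union_right
        (sdiff_subset.trans (subset_union_right.trans hIJ.subset_ground)))) hecl

lemma Indep.union_indep_of_subset_closure_s16 (hIJ : M.Indep (I ∪ J)) (hdisj : Disjoint I J)
    (hA : M.Indep A) (hAI : A ⊆ M.closure I) (hB : M.Indep B) (hBJ : B ⊆ M.closure J) :
    M.Indep (A ∪ B) := by
  have hAJ : M.Indep (J ∪ A) := union_comm A J ▸ hIJ.union_indep_of_subset_closure_left hdisj hA hAI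
  have hJA : Disjoint J A := by
    refine disjoint_left.2 fun e heJ heA => hIJ.notMem_closure_sdiff_of_mem (.inr heJ) ?_
    exact M.closure_subset_closure (subset_sdiff_singleton subset_union_left
      (hdisj.notMem_of_mem_right heJ)) (hAI heA)
  exact union_comm B A ▸ hAJ.union_indep_of_subset_closure_left hJA hB hBJ

lemma mem_closure_union_or_exists_pair_eq (hp : p ∈ X₁ ∪ X₂) (hq : q ∈ X₁ ∪ X₂)
    (he : e ∈ M.closure {p, q}) :
    e ∈ M.closure X₁ ∪ M.closure X₂ ∨ ∃ p' ∈ X₁, ∃ q' ∈ X₂, ({p, q} : Set α) = {p', q'} := by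
  rcases hp with hp | hp <;> rcases hq with hq | hq
  · exact .inl (.inl (M.closure_subset_closure (pair_subset hp hq) he))
  · exact .inr ⟨p, hp, q, hq, rfl⟩
  · exact .inr ⟨q, hq, p, hp, pair_comm p q⟩
  · exact .inl (.inr (M.closure_subset_closure (pair_subset hp hq) he))

/-- By exchange `p ∈ cl {e, q} ⊆ cl (insert a J₂)`, and closures of subsets of an independent set
intersect like the subsets. -/
lemma Indep.mem_closure_singleton_of_crossing (hJ : M.Indep (J₁ ∪ J₂)) (hdisj : Disjoint J₁ J₂)
    (hp : p ∈ M.closure J₁) (hq : q ∈ M.closure J₂) (he : e ∈ M.closure {p, q})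
    (heq : e ∉ M.closure {q}) (ha : a ∈ J₁) (hc : c ∈ J₂) (hac : e ∈ M.closure {a, c}) :
    p ∈ M.closure {a} := by
  have hJ' : M.Indep (J₁ ∪ insert a J₂) := by rwa [union_insert, insert_eq_of_mem (.inl ha)]
  have hpa : p ∈ M.closure (insert a J₂) :=
    M.closure_subset_closure_of_subset_closure
      (pair_subset (M.closure_subset_closure (insert_subset_insert (singleton_subset_iff.2 hc)) hac)
        (M.closure_subset_closure (subset_insert a J₂) hq))
      (mem_closure_insert heq he)
  have hpJ : p ∈ M.closure (J₁ ∩ insert a J₂) := hJ'.closure_inter_eq_inter_closure ▸ ⟨hp, hpa⟩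
  rwa [inter_insert_of_mem ha, hdisj.inter_eq, insert_empty_eq] at hpJ

end Matroid

section

open Matroid

variable {M : Matroid α} {I J : Set α} {e f x y s : α}

lemma MConnected.eq_empty_or_eq_empty (hM : MConnected M) (hIJ : M.Indep (I ∪ J))
    (hdisj : Disjoint I J) (hcover : M.E ⊆ M.closure I ∪ M.closure J) : I = ∅ ∨ J = ∅ := by
  simp only [← not_nonempty_iff_eq_empty, ← not_and_or]
  rintro ⟨⟨x, hx⟩, ⟨y, hy⟩⟩
  obtain hxy | ⟨C, hC, hxC, hyC⟩ :=
    hM.2 x (hIJ.subset_ground (.inl hx)) y (hIJ.subset_ground (.inr hy))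
  · exact hdisj.ne_of_mem hx hy hxy
  have hxI : x ∈ M.closure I := M.mem_closure_of_mem hx (subset_union_left.trans hIJ.subset_ground)
  have hyI : y ∉ M.closure I := fun h => hIJ.notMem_closure_sdiff_of_mem (.inr hy)
    (M.closure_subset_closure (subset_sdiff_singleton subset_union_left
      (hdisj.notMem_of_mem_right hy)) h)
  refine hC.2.1 (inter_union_sdiff C (M.closure I) ▸ hIJ.union_indep_of_subset_closure_s16 hdisj
    ((hC.2.2 y hyC).subset ?_) inter_subset_right ((hC.2.2 x hxC).subset ?_) ?_)
  · exact subset_sdiff_singleton inter_subset_left fun h => hyI h.2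
  · exact subset_sdiff_singleton sdiff_subset fun h => h.2 hxI
  · exact fun z hz => (hcover (hC.1 hz.1)).resolve_left hz.2

lemma MSimple.notMem_closure_singleton (hM : MSimple M) (hf : f ∈ M.E) (hef : e ≠ f) :
    e ∉ M.closure {f} := fun he => by
  have h := (hM e (M.closure_subset_ground _ he) f hf).notMem_closure_sdiff_of_mem
    (mem_insert e {f})
  rw [pair_sdiff_left hef] at h
  exact h he

lemma MSimple.notMem_closure_sdiff_of_mem_closure_pair (hM : MSimple M) (hI : M.Indep I)
    (hy : y ∈ I) (hs : s ∈ I \ {y}) (hx : x ∈ M.closure {y, s}) (hxs : x ≠ s) :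
    x ∉ M.closure (I \ {y}) :=
  notMem_closure_of_mem_closure_pair hx (hM.notMem_closure_singleton (hI.subset_ground hs.1) hxs)
    (M.mem_closure_of_mem hs (sdiff_subset.trans hI.subset_ground))
    (hI.notMem_closure_sdiff_of_mem hy)

end

/-- `E₊ = ⋃_{0 < i < j} F_{ij}` for `b = {b0, …, b_d}`. -/
def Eplus (M : Matroid α) (b : Set α) (b0 : α) : Set α :=
  ⋃ x ∈ b \ {b0}, ⋃ y ∈ b \ {b0}, ⋃ _ : x ≠ y, Fij M x y

lemma Eplus_subset_closure {M : Matroid α} {b : Set α} {b0 : α} :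
    Eplus M b b0 ⊆ M.closure (b \ {b0}) := by
  simp only [Eplus, iUnion_subset_iff]
  exact fun x hx y hy _ e he => M.closure_subset_closure (pair_subset hx hy) he.1

namespace IsCremonaBasis

open Matroid

variable {M : Matroid α} {b bs : Set α} {b0 e p q : α}

lemma exists_mem_Fij (hb : IsCremonaBasis M b) (he : e ∈ M.E) (heb : e ∉ b) :
    ∃ p ∈ b, ∃ q ∈ b, p ≠ q ∧ e ∈ Fij M p q := by
  have h : e ∈ ⋃ x ∈ b, ⋃ y ∈ b, ⋃ _ : x ≠ y, Fij M x y := hb.2.2 ▸ ⟨he, heb⟩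
  simpa only [mem_iUnion, exists_prop] using h

lemma notMem_of_mem_Fij (hb : IsCremonaBasis M b) (hp : p ∈ b) (hq : q ∈ b) (hpq : p ≠ q)
    (he : e ∈ Fij M p q) : e ∉ b := by
  have h : e ∈ ⋃ x ∈ b, ⋃ y ∈ b, ⋃ _ : x ≠ y, Fij M x y := by
    simp only [mem_iUnion, exists_prop]
    exact ⟨p, hp, q, hq, hpq, he⟩
  exact (hb.2.2 ▸ h).2

lemma mem_Eplus_or_exists_mem_Fij (hb : IsCremonaBasis M b) (hb0 : b0 ∈ b) (he : e ∈ M.E)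
    (heb : e ∉ b) : e ∈ Eplus M b b0 ∨ ∃ s ∈ b \ {b0}, e ∈ Fij M b0 s := by
  obtain ⟨p, hp, q, hq, hpq, hepq⟩ := hb.exists_mem_Fij he heb
  obtain rfl | hp0 := eq_or_ne p b0
  · exact .inr ⟨q, ⟨hq, hpq.symm⟩, hepq⟩
  obtain rfl | hq0 := eq_or_ne q b0
  · exact .inr ⟨p, ⟨hp, hp0⟩, by rwa [Fij, pair_comm]⟩
  simp only [Eplus, mem_iUnion, exists_prop]
  exact .inl ⟨p, ⟨hp, hp0⟩, q, ⟨hq, hq0⟩, hpq, hepq⟩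

lemma subset_closure_union (hsimple : MSimple M) (hb : IsCremonaBasis M b)
    (hbs : IsCremonaBasis M bs) (hinter : b ∩ bs = {b0}) :
    b ⊆ M.closure (bs ∩ M.closure (b \ {b0})) ∪ M.closure (bs \ M.closure (b \ {b0})) := by
  set H := M.closure (b \ {b0})
  have hb0 : b0 ∈ b ∩ bs := hinter ▸ rfl
  intro s hs
  obtain rfl | hs0 := eq_or_ne s b0
  · exact .inr (M.mem_closure_of_mem ⟨hb0.2, hb.1.indep.notMem_closure_sdiff_of_mem hb0.1⟩
      (sdiff_subset.trans hbs.1.subset_ground))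
  have hsH : s ∈ H := M.mem_closure_of_mem ⟨hs, hs0⟩ (sdiff_subset.trans hb.1.subset_ground)
  have hsbs : s ∉ bs := fun h => hs0 (hinter ▸ ⟨hs, h⟩ : s ∈ ({b0} : Set α))
  obtain ⟨a, ha, c, hc, -, hsac⟩ := hbs.exists_mem_Fij (hb.1.subset_ground hs) hsbs
  rcases mem_closure_union_or_exists_pair_eq ((inter_union_sdiff bs H).symm ▸ ha)
    ((inter_union_sdiff bs H).symm ▸ hc) hsac.1 with h | ⟨a', ha', c', hc', hac⟩
  · exact h
  have hsca : s ∈ M.closure {c', a'} := pair_comm a' c' ▸ hac ▸ hsac.1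
  exact absurd hsH <| notMem_closure_of_mem_closure_pair hsca
    (hsimple.notMem_closure_singleton (hbs.1.subset_ground ha'.1) fun h => hsbs (h ▸ ha'.1))
    ha'.2 hc'.2

lemma ground_subset_closure_union (hsimple : MSimple M) (hb : IsCremonaBasis M b)
    (hbs : IsCremonaBasis M bs) (hinter : b ∩ bs = {b0}) :
    M.E ⊆ M.closure (bs ∩ M.closure (b \ {b0})) ∪ M.closure (bs \ M.closure (b \ {b0})) := by
  set H := M.closure (b \ {b0})
  have hsplit : bs ⊆ bs ∩ H ∪ bs \ H := (inter_union_sdiff bs H).symm.subset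
  have hbsE : bs ∩ H ∪ bs \ H ⊆ M.E := (inter_union_sdiff bs H).symm ▸ hbs.1.subset_ground
  intro e he
  by_cases hebs : e ∈ bs
  · exact (hsplit hebs).imp (M.mem_closure_of_mem · (subset_union_left.trans hbsE))
      (M.mem_closure_of_mem · (subset_union_right.trans hbsE))
  by_cases heb : e ∈ b
  · exact hb.subset_closure_union hsimple hbs hinter heb
  obtain ⟨p, hp, q, hq, -, hepq⟩ := hb.exists_mem_Fij he heb
  obtain ⟨a, ha, c, hc, -, heac⟩ := hbs.exists_mem_Fij he hebs
  have hbcover := hb.subset_closure_union hsimple hbs hinter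
  rcases mem_closure_union_or_exists_pair_eq (hbcover hp) (hbcover hq) hepq.1 with
    h | ⟨p', hp', q', hq', hpq⟩
  · simpa only [closure_closure] using h
  rcases mem_closure_union_or_exists_pair_eq (hsplit ha) (hsplit hc) heac.1 with
    h | ⟨a', ha', c', hc', hac⟩
  · exact h
  have hpq' : p' ∈ b ∧ q' ∈ b := pair_subset_iff.1 (hpq ▸ pair_subset hp hq)
  have heq' : e ∉ M.closure {q'} := hsimple.notMem_closure_singleton (hb.1.subset_ground hpq'.2)
    fun h => heb (h ▸ hpq'.2)
  have hpa := ((inter_union_sdiff bs H).symm ▸ hbs.1.indep).mem_closure_singleton_of_crossing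
    disjoint_sdiff_inter.symm hp' hq' (hpq ▸ hepq.1) heq' ha' hc' (hac ▸ heac.1)
  -- `p'` is parallel to `a'`, so both are `b0`, which lies outside `H`
  exfalso
  by_cases hpa' : p' = a'
  · subst hpa'
    obtain rfl : p' = b0 := (hinter ▸ ⟨hpq'.1, ha'.1⟩ : p' ∈ ({b0} : Set α))
    exact hb.1.indep.notMem_closure_sdiff_of_mem hpq'.1 ha'.2
  · exact hsimple.notMem_closure_singleton (hbs.1.subset_ground ha'.1) hpa' hpa

lemma inter_closure_sdiff_eq_empty (hsimple : MSimple M) (hconn : MConnected M)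
    (hb : IsCremonaBasis M b) (hbs : IsCremonaBasis M bs) (hinter : b ∩ bs = {b0}) :
    bs ∩ M.closure (b \ {b0}) = ∅ := by
  have hb0 : b0 ∈ b ∩ bs := hinter ▸ rfl
  refine (hconn.eq_empty_or_eq_empty ((inter_union_sdiff _ _).symm ▸ hbs.1.indep)
    disjoint_sdiff_inter.symm (hb.ground_subset_closure_union hsimple hbs hinter)).resolve_right ?_
  exact Nonempty.ne_empty ⟨b0, hb0.2, hb.1.indep.notMem_closure_sdiff_of_mem hb0.1⟩

lemma Eplus_eq (hsimple : MSimple M) (hconn : MConnected M) (hb : IsCremonaBasis M b)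
    (hbs : IsCremonaBasis M bs) (hinter : b ∩ bs = {b0}) :
    Eplus M b b0 = M.closure (b \ {b0}) ∩ M.closure (bs \ {b0}) := by
  have hb0 : b0 ∈ b ∩ bs := hinter ▸ rfl
  have hbsH := hb.inter_closure_sdiff_eq_empty hsimple hconn hbs hinter
  have hbHs := hbs.inter_closure_sdiff_eq_empty hsimple hconn hb (inter_comm bs b ▸ hinter)
  refine Subset.antisymm (fun e he => ⟨Eplus_subset_closure he, by_contra fun heHs => ?_⟩) ?_
  · have heH : e ∈ M.closure (b \ {b0}) := Eplus_subset_closure he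
    simp only [Eplus, mem_iUnion, exists_prop] at he
    obtain ⟨x, hx, y, hy, hxy, hexy⟩ := he
    have heb : e ∉ b := hb.notMem_of_mem_Fij hx.1 hy.1 hxy hexy
    have hebs : e ∉ bs := fun h => hbsH.subset ⟨h, heH⟩
    obtain ⟨c, hc, hec⟩ := (hbs.mem_Eplus_or_exists_mem_Fij hb0.2 (M.closure_subset_ground _ heH)
      hebs).resolve_left fun h => heHs (Eplus_subset_closure h)
    have hcb : c ∉ b := fun h => hc.2 (hinter ▸ ⟨h, hc.1⟩ : c ∈ ({b0} : Set α))
    obtain ⟨s, hs, hcs⟩ := (hb.mem_Eplus_or_exists_mem_Fij hb0.1 (hbs.1.subset_ground hc.1)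
      hcb).resolve_left fun h => hbsH.subset ⟨hc.1, Eplus_subset_closure h⟩
    have hes : e ∈ M.closure {b0, s} := M.closure_subset_closure_of_subset_closure
      (pair_subset (M.mem_closure_of_mem (mem_insert _ _) (pair_subset (hb.1.subset_ground hb0.1)
        (hb.1.subset_ground hs.1))) hcs.1) hec.1
    exact hsimple.notMem_closure_sdiff_of_mem_closure_pair hb.1.indep hb0.1 hs hes
      (fun h => heb (h ▸ hs.1)) heH
  · rintro z ⟨hzH, hzHs⟩
    have hzb : z ∉ b := fun h => hbHs.subset ⟨h, hzHs⟩
    refine (hb.mem_Eplus_or_exists_mem_Fij hb0.1 (M.closure_subset_ground _ hzH) hzb).resolve_right ?_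
    rintro ⟨s, hs, hzs⟩
    exact hsimple.notMem_closure_sdiff_of_mem_closure_pair hb.1.indep hb0.1 hs hzs.1
      (fun h => hzs.2 (h ▸ mem_insert_of_mem _ rfl)) hzH

end IsCremonaBasis

theorem stmt16_general (M : Matroid α) (hsimple : MSimple M)
    (hconn : MConnected M)
    (b bs : Set α) (hb : IsCremonaBasis M b) (hbs : IsCremonaBasis M bs)
    (b0 : α) (hinter : b ∩ bs = {b0}) :
    (⋃ x ∈ b \ {b0}, ⋃ y ∈ b \ {b0}, ⋃ _ : x ≠ y, Fij M x y) =
        M.closure (b \ {b0}) ∩ M.closure (bs \ {b0}) ∧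
      M.IsFlat (⋃ x ∈ b \ {b0}, ⋃ y ∈ b \ {b0}, ⋃ _ : x ≠ y, Fij M x y) := by
  have h : Eplus M b b0 = _ := hb.Eplus_eq hsimple hconn hbs hinter
  exact ⟨h, (h ▸ (M.isFlat_closure _).inter (M.isFlat_closure _) : M.IsFlat (Eplus M b b0))⟩

/-- With two Cremona bases `b`, `b*` meeting exactly in `b₀`, the set
`E₊ = ⋃_{0<i<j} F_{ij}` equals `cl(b \ {b₀}) ∩ cl(b* \ {b₀})`; in particular it is
a flat. -/
theorem stmt16 (M : Matroid α) (hfin : M.E.Finite) (hsimple : MSimple M)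
    (hconn : MConnected M) (d : ℕ) (hd : 2 ≤ d) (hrk : mRank M M.E = d + 1)
    (b bs : Set α) (hb : IsCremonaBasis M b) (hbs : IsCremonaBasis M bs) (hne : b ≠ bs)
    (b0 : α) (hinter : b ∩ bs = {b0}) :
    (⋃ x ∈ b \ {b0}, ⋃ y ∈ b \ {b0}, ⋃ _ : x ≠ y, Fij M x y) =
        M.closure (b \ {b0}) ∩ M.closure (bs \ {b0}) ∧
      M.IsFlat (⋃ x ∈ b \ {b0}, ⋃ y ∈ b \ {b0}, ⋃ _ : x ≠ y, Fij M x y) :=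
  stmt16_general M hsimple hconn b bs hb hbs b0 hinter
end

section
/- Let M be a simple connected matroid of rank d+1 ≥ 3 with two different Cremona bases b and b*, and suppose 0 < i < j are such that b_i, b_j ∈ b \ b* and F_{ij} ≠ ∅. Then F_{ij} consists of exactly one element; i.e., the rank-2 flat cl{b_i, b_j} has exactly 3 elements. -/
open Set

variable {α : Type*}

/-!
With respect to a Cremona basis `B` of a simple matroid, every element `e` has a support
`suppb M B {e}`: `{e}` if `e ∈ B`, and the unique pair `{s, t}` with `e ∈ F_{st}` otherwise.
By independence of `B` it is the smallest subset of `B` whose closure contains `e`, so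
`e ∈ cl{f, g}` forces the support of `e` into the union of the supports of `f` and `g`.

If `x, y ∈ b \ bs` lay on a line spanned by two elements of `bs`, comparing supports with
respect to both bases shows `F_{xz} = F_{yz} = ∅` for every other `z ∈ b`. Then every element
lies in `cl{x, y}` or in `cl(b \ {x, y})`, two skew flats, so a circuit through `x` and a third
basis element `z` (there is one since the rank is at least 3) would be independent. Hence the
`bs`-supports of `x` and `y` are distinct pairs, and every point of `F_{xy}` has the same support
`{a, c}`, with `a` taken from the first pair only and `c` from the second only; two such points
would give `cl{x, y} = cl{a, c}`.
-/

section Skew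

variable {M : Matroid α} {S T A B : Set α}

lemma Matroid.Indep.union_indep_of_subset_closure_right (hST : M.Indep (S ∪ T))
    (hd : Disjoint S T) (hB : M.Indep B) (hBT : B ⊆ M.closure T) : M.Indep (S ∪ B) := by
  refine ((hST.subset subset_union_left).union_indep_iff_forall_notMem_closure_left hB).2
    fun s hs hcl => hST.notMem_closure_sdiff_of_mem (Or.inl hs.1) ?_
  have hsT : s ∉ T := hd.notMem_of_mem_left hs.1
  refine M.closure_subset_closure_of_subset_closure (union_subset ?_ ?_) hcl
  · exact M.subset_closure_of_subset (sdiff_subset_sdiff_left subset_union_left)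
      (sdiff_subset.trans hST.subset_ground)
  · exact hBT.trans (M.closure_subset_closure (subset_sdiff_singleton subset_union_right hsT))

lemma Matroid.Indep.union_indep_of_subset_closure_s17 (hST : M.Indep (S ∪ T)) (hd : Disjoint S T)
    (hA : M.Indep A) (hAS : A ⊆ M.closure S) (hB : M.Indep B) (hBT : B ⊆ M.closure T) :
    M.Indep (A ∪ B) := by
  have hSB := hST.union_indep_of_subset_closure_right hd hB hBT
  have hdBS : Disjoint B S := disjoint_left.2 fun e heB heS =>
    hd.notMem_of_mem_left heS <|
      (hST.closure_inter_eq_self_of_subset subset_union_right).subset ⟨hBT heB, Or.inl heS⟩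
  rw [union_comm] at hSB ⊢
  exact hSB.union_indep_of_subset_closure_right hdBS hA hAS

variable {C : Set α}

lemma MCircuit.subset_closure_or_subset_closure (hC : MCircuit M C) (hST : M.Indep (S ∪ T))
    (hd : Disjoint S T) (hcover : C ⊆ M.closure S ∪ M.closure T) :
    C ⊆ M.closure S ∨ C ⊆ M.closure T := by
  by_contra! h
  obtain ⟨⟨z, hzC, hzS⟩, ⟨w, hwC, hwT⟩⟩ := And.imp not_subset.1 not_subset.1 h
  have hwS : w ∈ M.closure S := (hcover hwC).resolve_right hwT
  refine hC.2.1 ?_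
  rw [← inter_union_sdiff C (M.closure S)]
  refine hST.union_indep_of_subset_closure_s17 hd
    ((hC.2.2 z hzC).subset fun e he => ⟨he.1, fun h => hzS (h ▸ he.2)⟩) inter_subset_right
    ((hC.2.2 w hwC).subset fun e he => ⟨he.1, fun h => he.2 (h ▸ hwS)⟩)
    fun e he => (hcover he.1).resolve_left he.2

end Skew

section Simple

variable {M : Matroid α} {p q u v : α}

lemma MSimple.eq_of_mem_closure_singleton_s17 (hs : MSimple M) (hv : v ∈ M.E)
    (hp : p ∈ M.closure {v}) : p = v := by
  by_contra hpv
  have hI : M.Indep {v, p} := hs v hv p (M.closure_subset_ground _ hp)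
  exact hI.notMem_closure_sdiff_of_mem (mem_insert_of_mem v rfl)
    (by rwa [pair_sdiff_right (Ne.symm hpv)])

lemma MSimple.mem_closure_pair_swap (hs : MSimple M) (hv : v ∈ M.E)
    (hp : p ∈ M.closure {u, v}) (hpv : p ≠ v) : u ∈ M.closure {p, v} :=
  Matroid.mem_closure_insert (fun h => hpv (hs.eq_of_mem_closure_singleton_s17 hv h)) hp

lemma MSimple.closure_pair_eq_of_mem_of_ne (hs : MSimple M) (hv : v ∈ M.E)
    (hp : p ∈ M.closure {u, v}) (hpv : p ≠ v) : M.closure {p, v} = M.closure {u, v} :=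
  Matroid.closure_insert_congr ⟨hp, fun h => hpv (hs.eq_of_mem_closure_singleton_s17 hv h)⟩

lemma MSimple.closure_pair_eq_of_mem (hs : MSimple M) (hv : v ∈ M.E)
    (hp : p ∈ M.closure {u, v}) (hq : q ∈ M.closure {u, v}) (hpq : p ≠ q) :
    M.closure {p, q} = M.closure {u, v} := by
  obtain rfl | hpv := eq_or_ne p v
  · rw [pair_comm]
    exact hs.closure_pair_eq_of_mem_of_ne hv hq hpq.symm
  · have hline := hs.closure_pair_eq_of_mem_of_ne hv hp hpv
    rw [← hline, pair_comm] at hq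
    rw [← hline, pair_comm p q, pair_comm p v]
    exact hs.closure_pair_eq_of_mem_of_ne (M.closure_subset_ground _ hp) hq hpq.symm

end Simple

section Support

variable {M : Matroid α} {B A : Set α} {e f g a c s t u v : α}

lemma suppb_subset (M : Matroid α) (B S : Set α) : suppb M B S ⊆ B :=
  union_subset inter_subset_left <| iUnion₂_subset fun _ hs => iUnion₂_subset fun _ ht =>
    iUnion₂_subset fun _ _ => pair_subset hs ht

lemma IsCremonaBasis.Fij_subset_s17 (hB : IsCremonaBasis M B) (hs : s ∈ B) (ht : t ∈ B)
    (hst : s ≠ t) : Fij M s t ⊆ M.E \ B := fun e he => by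
  rw [← hB.2.2]
  exact mem_iUnion₂.2 ⟨s, hs, mem_iUnion₂.2 ⟨t, ht, mem_iUnion.2 ⟨hst, he⟩⟩⟩

lemma IsCremonaBasis.exists_mem_Fij_s17 (hB : IsCremonaBasis M B) (he : e ∈ M.E \ B) :
    ∃ s ∈ B, ∃ t ∈ B, s ≠ t ∧ e ∈ Fij M s t := by
  simpa only [← hB.2.2, mem_iUnion, exists_prop] using he

lemma IsCremonaBasis.suppb_singleton_of_mem (hB : IsCremonaBasis M B) (he : e ∈ B) :
    suppb M B {e} = {e} := by
  ext w
  simp only [suppb, mem_union, mem_inter_iff, mem_singleton_iff, mem_iUnion, exists_prop,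
    singleton_inter_nonempty]
  constructor
  · rintro (⟨-, rfl⟩ | ⟨s, hs, t, ht, hst, hF, -⟩)
    · rfl
    · exact absurd he (hB.Fij_subset_s17 hs ht hst hF).2
  · rintro rfl
    exact Or.inl ⟨he, rfl⟩

lemma IsCremonaBasis.suppb_singleton_of_mem_Fij (hB : IsCremonaBasis M B) (hs : s ∈ B)
    (ht : t ∈ B) (hst : s ≠ t) (he : e ∈ Fij M s t) : suppb M B {e} = {s, t} := by
  have heB : e ∉ B := (hB.Fij_subset_s17 hs ht hst he).2
  ext w
  simp only [suppb, mem_union, mem_inter_iff, mem_singleton_iff, mem_iUnion, exists_prop,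
    singleton_inter_nonempty]
  constructor
  · rintro (⟨hwB, rfl⟩ | ⟨s', hs', t', ht', hst', hF, hw⟩)
    · exact absurd hwB heB
    · by_contra hpair
      exact (hB.2.1 s' hs' t' ht' s hs t ht hst' hst fun h => hpair (h ▸ hw)).ne_of_mem hF he rfl
  · exact fun hw => Or.inr ⟨s, hs, t, ht, hst, he, hw⟩

lemma IsCremonaBasis.mem_closure_suppb (hB : IsCremonaBasis M B) (he : e ∈ M.E) :
    e ∈ M.closure (suppb M B {e}) := by
  by_cases heB : e ∈ B
  · rw [hB.suppb_singleton_of_mem heB]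
    exact M.mem_closure_of_mem' rfl he
  · obtain ⟨s, hs, t, ht, hst, heF⟩ := hB.exists_mem_Fij_s17 ⟨he, heB⟩
    rw [hB.suppb_singleton_of_mem_Fij hs ht hst heF]
    exact heF.1

lemma IsCremonaBasis.suppb_subset_of_mem_closure (hsimple : MSimple M)
    (hB : IsCremonaBasis M B) (hA : A ⊆ B) (he : e ∈ M.closure A) : suppb M B {e} ⊆ A := by
  have hI := hB.1.indep
  by_cases heB : e ∈ B
  · rw [hB.suppb_singleton_of_mem heB, singleton_subset_iff]
    exact (hI.closure_inter_eq_self_of_subset hA).subset ⟨he, heB⟩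
  obtain ⟨s, hs, t, ht, hst, heF⟩ := hB.exists_mem_Fij_s17 ⟨M.closure_subset_ground _ he, heB⟩
  rw [hB.suppb_singleton_of_mem_Fij hs ht hst heF]
  have he' : e ∈ M.closure ({s, t} ∩ A) := by
    rw [(hI.subset (union_subset (pair_subset hs ht) hA)).closure_inter_eq_inter_closure]
    exact ⟨heF.1, he⟩
  have hBE := hI.subset_ground
  refine pair_subset (by_contra fun hsA => heF.2 (Or.inr ?_))
    (by_contra fun htA => heF.2 (Or.inl ?_))
  · refine hsimple.eq_of_mem_closure_singleton_s17 (hBE ht) (M.closure_subset_closure ?_ he')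
    rintro w ⟨rfl | rfl, hwA⟩
    exacts [absurd hwA hsA, rfl]
  · refine hsimple.eq_of_mem_closure_singleton_s17 (hBE hs) (M.closure_subset_closure ?_ he')
    rintro w ⟨rfl | rfl, hwA⟩
    exacts [rfl, absurd hwA htA]

lemma IsCremonaBasis.suppb_subset_union_of_mem_closure_pair (hsimple : MSimple M)
    (hB : IsCremonaBasis M B) (hf : f ∈ M.E) (hg : g ∈ M.E) (he : e ∈ M.closure {f, g}) :
    suppb M B {e} ⊆ suppb M B {f} ∪ suppb M B {g} := by
  refine hB.suppb_subset_of_mem_closure hsimple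
    (union_subset (suppb_subset M B _) (suppb_subset M B _)) ?_
  refine M.closure_subset_closure_of_subset_closure (pair_subset ?_ ?_) he
  · exact M.closure_subset_closure subset_union_left (hB.mem_closure_suppb hf)
  · exact M.closure_subset_closure subset_union_right (hB.mem_closure_suppb hg)

lemma IsCremonaBasis.mem_closure_pair_of_mem_suppb (hB : IsCremonaBasis M B) (he : e ∈ M.E)
    (ha : a ∈ suppb M B {e}) (hc : c ∈ suppb M B {e}) (hac : a ≠ c) :
    e ∈ M.closure {a, c} := by
  by_cases heB : e ∈ B
  · rw [hB.suppb_singleton_of_mem heB] at ha hc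
    exact absurd (ha.trans hc.symm) hac
  obtain ⟨s, hs, t, ht, hst, heF⟩ := hB.exists_mem_Fij_s17 ⟨he, heB⟩
  rw [hB.suppb_singleton_of_mem_Fij hs ht hst heF] at ha hc
  rw [eq_of_subset_of_ncard_le (pair_subset ha hc) (by rw [ncard_pair hst, ncard_pair hac])]
  exact heF.1

lemma IsCremonaBasis.suppb_eq_of_mem_closure_pair (hsimple : MSimple M)
    (hB : IsCremonaBasis M B) (hu : u ∈ B) (hv : v ∈ B) (heB : e ∉ B)
    (he : e ∈ M.closure {u, v}) : suppb M B {e} = {u, v} := by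
  obtain ⟨s, hs, t, ht, hst, heF⟩ := hB.exists_mem_Fij_s17 ⟨M.closure_subset_ground _ he, heB⟩
  have hsupp := hB.suppb_singleton_of_mem_Fij hs ht hst heF
  refine eq_of_subset_of_ncard_le (hsupp ▸ hB.suppb_subset_of_mem_closure hsimple
    (pair_subset hu hv) he) ?_ (toFinite _)
  rw [hsupp, ncard_pair hst]
  exact (ncard_insert_le u {v}).trans (by rw [ncard_singleton])

end Support

section Collinear

variable {M : Matroid α} {b bs : Set α} {x y z q t u v : α}

lemma IsCremonaBasis.mem_closure_pair_of_Fij_mem_closure (hsimple : MSimple M)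
    (hb : IsCremonaBasis M b) (hx : x ∈ b) (hy : y ∈ b) (hz : z ∈ b) (hxy : x ≠ y)
    (hzx : z ≠ x) (hzy : z ≠ y) (hu : u ∈ Fij M x y) (hv : v ∈ Fij M x y)
    (hq : q ∈ Fij M x z) (ht : t ∈ M.E) (hu_qt : u ∈ M.closure {q, t})
    (hv_zt : v ∈ M.closure {z, t}) :
    t ∈ M.closure {x, y} := by
  have hbE := hb.1.indep.subset_ground
  have hqE : q ∈ M.E := M.closure_subset_ground _ hq.1
  have hyt : y ∈ suppb M b {t} := by
    have h := hb.suppb_subset_union_of_mem_closure_pair hsimple hqE ht hu_qt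
    rw [hb.suppb_singleton_of_mem_Fij hx hy hxy hu,
      hb.suppb_singleton_of_mem_Fij hx hz hzx.symm hq] at h
    exact (h (mem_insert_of_mem x rfl)).resolve_left (by
      rintro (h | h); exacts [hxy h.symm, hzy h.symm])
  have hxt : x ∈ suppb M b {t} := by
    have h := hb.suppb_subset_union_of_mem_closure_pair hsimple (hbE hz) ht hv_zt
    rw [hb.suppb_singleton_of_mem_Fij hx hy hxy hv, hb.suppb_singleton_of_mem hz] at h
    exact (h (mem_insert x _)).resolve_left hzx.symm
  exact hb.mem_closure_pair_of_mem_suppb ht hxt hyt hxy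

/-- Both supports would contain a third element `t ∈ bs`, with `u ∈ cl{q, t}` and
`v ∈ cl{z, t}`; the `b`-supports of `u` and `v` then put `t` on the line `xy = uv`. -/
lemma notMem_suppb_of_mem_suppb_of_collinear (hsimple : MSimple M) (hb : IsCremonaBasis M b)
    (hbs : IsCremonaBasis M bs) (hx : x ∈ b \ bs) (hy : y ∈ b \ bs) (hxy : x ≠ y)
    (hu : u ∈ bs) (hv : v ∈ bs) (hL : M.closure {u, v} = M.closure {x, y})
    (hz : z ∈ b) (hzx : z ≠ x) (hzy : z ≠ y) (hq : q ∈ Fij M x z)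
    (hzL : z ∉ M.closure {u, v}) (huq : u ∈ suppb M bs {q}) : v ∉ suppb M bs {z} := by
  intro hvz
  have hbE := hb.1.indep.subset_ground
  have hbsE := hbs.1.indep.subset_ground
  have hqE : q ∈ M.E := M.closure_subset_ground _ hq.1
  have huvE : ({u, v} : Set α) ⊆ M.E := pair_subset (hbsE hu) (hbsE hv)
  have huL : u ∈ M.closure {u, v} := M.mem_closure_of_mem (mem_insert u _) huvE
  have hvL : v ∈ M.closure {u, v} := M.mem_closure_of_mem (mem_insert_of_mem u rfl) huvE
  have hFxy : ∀ w ∈ bs, w ∈ M.closure {u, v} → w ∈ Fij M x y := fun w hw hwL =>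
    ⟨hL ▸ hwL, by rintro (rfl | rfl); exacts [hx.2 hw, hy.2 hw]⟩
  obtain ⟨t, htz, htuv⟩ : ∃ t ∈ suppb M bs {z}, t ∉ ({u, v} : Set α) := by
    by_contra! h
    exact hzL (M.closure_subset_closure h (hbs.mem_closure_suppb (hbE hz)))
  have htbs : t ∈ bs := suppb_subset M bs _ htz
  have htL : t ∉ M.closure {u, v} := fun h => htuv <| by
    simpa [hbs.suppb_singleton_of_mem htbs] using
      hbs.suppb_subset_of_mem_closure hsimple (pair_subset hu hv) h
  have htq : t ∈ suppb M bs {q} := by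
    have hσx : suppb M bs {x} ⊆ {u, v} := hbs.suppb_subset_of_mem_closure hsimple
      (pair_subset hu hv) (hL ▸ M.mem_closure_of_mem (mem_insert x _) (pair_subset (hbE hx.1)
        (hbE hy.1)))
    have hzxq := hsimple.mem_closure_pair_swap (hbE hx.1) (pair_comm x z ▸ hq.1)
      fun h => hq.2 (Or.inl h)
    exact (hbs.suppb_subset_union_of_mem_closure_pair hsimple hqE (hbE hx.1) hzxq
      htz).resolve_right fun h => htuv (hσx h)
  have hne : ∀ w p, w ∈ M.closure {u, v} → w ∈ suppb M bs {p} → p ≠ t := by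
    rintro w p hwL hwp rfl
    rw [hbs.suppb_singleton_of_mem htbs, mem_singleton_iff] at hwp
    exact htL (hwp ▸ hwL)
  have hu_qt : u ∈ M.closure {q, t} := hsimple.mem_closure_pair_swap (hbsE htbs)
    (hbs.mem_closure_pair_of_mem_suppb hqE huq htq fun h => htL (h ▸ huL)) (hne u q huL huq)
  have hv_zt : v ∈ M.closure {z, t} := hsimple.mem_closure_pair_swap (hbsE htbs)
    (hbs.mem_closure_pair_of_mem_suppb (hbE hz) hvz htz fun h => htL (h ▸ hvL))
    (hne v z hvL hvz)
  exact htL (hL ▸ hb.mem_closure_pair_of_Fij_mem_closure hsimple hx.1 hy.1 hz hxy hzx hzy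
    (hFxy u hu huL) (hFxy v hv hvL) hq (hbsE htbs) hu_qt hv_zt)

lemma Fij_eq_empty_of_collinear (hsimple : MSimple M) (hb : IsCremonaBasis M b)
    (hbs : IsCremonaBasis M bs) (hx : x ∈ b \ bs) (hy : y ∈ b \ bs) (hxy : x ≠ y)
    (hu : u ∈ bs) (hv : v ∈ bs) (huv : u ≠ v) (hxuv : x ∈ M.closure {u, v})
    (hyuv : y ∈ M.closure {u, v}) (hz : z ∈ b) (hzx : z ≠ x) (hzy : z ≠ y) :
    Fij M x z = ∅ := by
  have hbE := hb.1.indep.subset_ground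
  have hL : M.closure {u, v} = M.closure {x, y} :=
    (hsimple.closure_pair_eq_of_mem (hbs.1.indep.subset_ground hv) hxuv hyuv hxy).symm
  have hoff : ∀ w, w ∈ M.closure {u, v} → suppb M b {w} ⊆ {x, y} := fun w hw =>
    hb.suppb_subset_of_mem_closure hsimple (pair_subset hx.1 hy.1) (hL ▸ hw)
  have hzL : z ∉ M.closure {u, v} := fun h => by
    simpa [hb.suppb_singleton_of_mem hz, hzx, hzy] using hoff z h
  refine eq_empty_iff_forall_notMem.2 fun q hq => ?_
  have hqE : q ∈ M.E := M.closure_subset_ground _ hq.1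
  have hqL : q ∉ M.closure {u, v} := fun h => by
    have hqxy := hoff q h
    rw [hb.suppb_singleton_of_mem_Fij hx.1 hz hzx.symm hq] at hqxy
    simpa [hzx, hzy] using hqxy (mem_insert_of_mem x rfl)
  have hsplit := hbs.suppb_subset_union_of_mem_closure_pair hsimple hqE (hbE hz)
    (hsimple.mem_closure_pair_swap (hbE hz) hq.1 fun h => hq.2 (Or.inr h))
  rw [hbs.suppb_eq_of_mem_closure_pair hsimple hu hv hx.2 hxuv, pair_subset_iff] at hsplit
  rcases hsplit with ⟨huq | huz, hvq | hvz⟩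
  · exact hqL (hbs.mem_closure_pair_of_mem_suppb hqE huq hvq huv)
  · exact notMem_suppb_of_mem_suppb_of_collinear hsimple hb hbs hx hy hxy hu hv hL hz hzx hzy hq
      hzL huq hvz
  · rw [pair_comm] at hL hzL
    exact notMem_suppb_of_mem_suppb_of_collinear hsimple hb hbs hx hy hxy hv hu hL hz hzx hzy hq
      hzL hvq huz
  · exact hzL (hbs.mem_closure_pair_of_mem_suppb (hbE hz) huz hvz huv)

end Collinear

lemma IsCremonaBasis.mem_closure_or_mem_closure_sdiff {M : Matroid α} {B P : Set α} {e : α}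
    (hB : IsCremonaBasis M B) (hsep : ∀ s ∈ P, ∀ t ∈ B \ P, Fij M s t = ∅)
    (he : e ∈ M.E) :
    e ∈ M.closure P ∨ e ∈ M.closure (B \ P) := by
  have hBE := hB.1.indep.subset_ground
  by_cases heB : e ∈ B
  · by_cases heP : e ∈ P
    · exact Or.inl (M.mem_closure_of_mem' heP)
    · exact Or.inr (M.mem_closure_of_mem' (show e ∈ B \ P from ⟨heB, heP⟩))
  obtain ⟨s, hs, t, ht, hst, heF⟩ := hB.exists_mem_Fij_s17 ⟨he, heB⟩
  by_cases hsP : s ∈ P <;> by_cases htP : t ∈ P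
  · exact Or.inl (M.closure_subset_closure (pair_subset hsP htP) heF.1)
  · exact absurd (hsep s hsP t ⟨ht, htP⟩ ▸ heF) (notMem_empty e)
  · rw [Fij, pair_comm] at heF
    exact absurd (hsep t htP s ⟨hs, hsP⟩ ▸ heF) (notMem_empty e)
  · exact Or.inr <|
      M.closure_subset_closure (pair_subset (s := B \ P) ⟨hs, hsP⟩ ⟨ht, htP⟩) heF.1

lemma MConnected.not_collinear {M : Matroid α} {b bs : Set α} {x y z u v : α}
    (hconn : MConnected M) (hsimple : MSimple M) (hb : IsCremonaBasis M b)
    (hbs : IsCremonaBasis M bs) (hx : x ∈ b \ bs) (hy : y ∈ b \ bs) (hxy : x ≠ y)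
    (hz : z ∈ b \ {x, y}) (hu : u ∈ bs) (hv : v ∈ bs) (huv : u ≠ v) :
    ¬ (x ∈ M.closure {u, v} ∧ y ∈ M.closure {u, v}) := by
  rintro ⟨hxuv, hyuv⟩
  have hbI := hb.1.indep
  have hxyb : ({x, y} : Set α) ⊆ b := pair_subset hx.1 hy.1
  have hsep : ∀ s ∈ ({x, y} : Set α), ∀ t ∈ b \ {x, y}, Fij M s t = ∅ := by
    rintro s (rfl | rfl) t ⟨htb, htxy⟩ <;> simp only [mem_insert_iff, mem_singleton_iff,
      not_or] at htxy
    · exact Fij_eq_empty_of_collinear hsimple hb hbs hx hy hxy hu hv huv hxuv hyuv htb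
        htxy.1 htxy.2
    · exact Fij_eq_empty_of_collinear hsimple hb hbs hy hx hxy.symm hu hv huv hyuv hxuv htb
        htxy.2 htxy.1
  obtain ⟨C, hC, hxC, hzC⟩ := (hconn.2 x (hbI.subset_ground hx.1) z
    (hbI.subset_ground hz.1)).resolve_left fun h => hz.2 (h ▸ mem_insert x _)
  rcases hC.subset_closure_or_subset_closure (by rwa [union_sdiff_cancel hxyb])
    disjoint_sdiff_right fun e he => hb.mem_closure_or_mem_closure_sdiff hsep (hC.1 he) with h | h
  · exact hz.2 ((hbI.closure_inter_eq_self_of_subset hxyb).subset ⟨h hzC, hz.1⟩)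
  · exact ((hbI.closure_inter_eq_self_of_subset sdiff_subset).subset ⟨h hxC, hx.1⟩).2
      (mem_insert x _)

lemma IsCremonaBasis.exists_mem_suppb_notMem_suppb {M : Matroid α} {B : Set α} {x y : α}
    (hB : IsCremonaBasis M B) (hx : x ∈ M.E) (hy : y ∈ M.E \ B)
    (hline : ∀ u ∈ B, ∀ v ∈ B, u ≠ v →
      ¬ (x ∈ M.closure {u, v} ∧ y ∈ M.closure {u, v})) :
    ∃ a ∈ suppb M B {x}, a ∉ suppb M B {y} := by
  by_contra! h
  obtain ⟨s, hs, t, ht, hst, hyF⟩ := hB.exists_mem_Fij_s17 hy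
  rw [hB.suppb_singleton_of_mem_Fij hs ht hst hyF] at h
  exact hline s hs t ht hst ⟨M.closure_subset_closure h (hB.mem_closure_suppb hx), hyF.1⟩

lemma IsCremonaBasis.Fij_subsingleton {M : Matroid α} {B : Set α} {x y : α}
    (hsimple : MSimple M) (hB : IsCremonaBasis M B) (hx : x ∈ M.E \ B) (hy : y ∈ M.E \ B)
    (hline : ∀ u ∈ B, ∀ v ∈ B, u ≠ v →
      ¬ (x ∈ M.closure {u, v} ∧ y ∈ M.closure {u, v})) :
    (Fij M x y).Subsingleton := by
  have hBE := hB.1.indep.subset_ground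
  obtain ⟨a, hax, hay⟩ := hB.exists_mem_suppb_notMem_suppb hx.1 hy hline
  obtain ⟨c, hcy, hcx⟩ := hB.exists_mem_suppb_notMem_suppb hy.1 hx
    fun u hu v hv huv h => hline u hu v hv huv h.symm
  have hac : a ≠ c := by rintro rfl; exact hay hcy
  have hFac : ∀ p ∈ Fij M x y, p ∈ M.closure {a, c} := by
    intro p hp
    have hpE : p ∈ M.E := M.closure_subset_ground _ hp.1
    have hx_py := hsimple.mem_closure_pair_swap hy.1 hp.1 fun h => hp.2 (Or.inr h)
    have hy_px := hsimple.mem_closure_pair_swap hx.1 (pair_comm x y ▸ hp.1)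
      fun h => hp.2 (Or.inl h)
    refine hB.mem_closure_pair_of_mem_suppb hpE ?_ ?_ hac
    · exact (hB.suppb_subset_union_of_mem_closure_pair hsimple hpE hy.1 hx_py hax).resolve_right
        hay
    · exact (hB.suppb_subset_union_of_mem_closure_pair hsimple hpE hx.1 hy_px hcy).resolve_right
        hcx
  intro p hp q hq
  by_contra hpq
  have hxyE : ({x, y} : Set α) ⊆ M.E := pair_subset hx.1 hy.1
  have hpq_xy := hsimple.closure_pair_eq_of_mem hy.1 hp.1 hq.1 hpq
  have hpq_ac := hsimple.closure_pair_eq_of_mem (hBE (suppb_subset M B _ hcy)) (hFac p hp)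
    (hFac q hq) hpq
  rw [hpq_xy] at hpq_ac
  exact hline a (suppb_subset M B _ hax) c (suppb_subset M B _ hcy) hac
    ⟨hpq_ac ▸ M.mem_closure_of_mem (mem_insert x _) hxyE,
      hpq_ac ▸ M.mem_closure_of_mem (mem_insert_of_mem x rfl) hxyE⟩

-- For infinite `B` both sides are junk `0`: `ncard` of an infinite set, `sSup` of an unbounded one.
lemma Matroid.IsBase.mRank_ground {M : Matroid α} {B : Set α} (hB : M.IsBase B) :
    mRank M M.E = B.ncard := by
  rcases B.finite_or_infinite with hfin | hinf
  · refine IsGreatest.csSup_eq ⟨⟨B, hB.indep, hB.subset_ground, rfl⟩, ?_⟩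
    rintro n ⟨I, hI, -, rfl⟩
    obtain ⟨B', hB', hIB'⟩ := hI.exists_isBase_superset
    exact (ncard_le_ncard hIB' (hB.finite_of_finite hfin hB')).trans
      (hB'.ncard_eq_ncard_of_isBase hB).le
  · rw [hinf.ncard]
    refine Nat.sSup_of_not_bddAbove fun ⟨N, hN⟩ => ?_
    obtain ⟨I, hIB, hI⟩ := hinf.exists_subset_ncard_eq (N + 1)
    have := hN ⟨I, hB.indep.subset hIB, hIB.trans hB.subset_ground, hI.2⟩
    omega

theorem stmt17_general (M : Matroid α) (hsimple : MSimple M)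
    (hconn : MConnected M) (d : ℕ) (hd : 2 ≤ d) (hrk : mRank M M.E = d + 1)
    (b bs : Set α) (hb : IsCremonaBasis M b) (hbs : IsCremonaBasis M bs)
    (x y : α) (hx : x ∈ b \ bs) (hy : y ∈ b \ bs) (hxy : x ≠ y)
    (hFne : (Fij M x y).Nonempty) :
    (∃ e, Fij M x y = {e}) ∧ (M.closure {x, y}).ncard = 3 := by
  have hbE := hb.1.indep.subset_ground
  obtain ⟨z, hz⟩ : (b \ {x, y}).Nonempty := by
    refine nonempty_iff_ne_empty.2 fun h => ?_
    have := ncard_le_ncard (sdiff_eq_empty.1 h) (toFinite {x, y})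
    rw [← hb.1.mRank_ground, hrk, ncard_pair hxy] at this
    omega
  obtain ⟨e, he⟩ := hFne
  have hF : Fij M x y = {e} :=
    (hbs.Fij_subsingleton hsimple ⟨hbE hx.1, hx.2⟩ ⟨hbE hy.1, hy.2⟩ fun u hu v hv huv =>
      hconn.not_collinear hsimple hb hbs hx hy hxy hz hu hv huv).eq_singleton_of_mem he
  refine ⟨⟨e, hF⟩, ncard_eq_three.2 ⟨x, y, e, hxy, ?_, ?_, ?_⟩⟩
  · exact fun h => he.2 (Or.inl h.symm)
  · exact fun h => he.2 (Or.inr h.symm)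
  · rw [← union_sdiff_cancel (M.subset_closure {x, y} (pair_subset (hbE hx.1) (hbE hy.1)))]
    change {x, y} ∪ Fij M x y = _
    rw [hF, union_singleton, insert_comm e, pair_comm e y]

/-- If `b`, `b*` are two different Cremona bases and `x, y ∈ b \ b*`
are distinct with `F_{xy} ≠ ∅`, then `F_{xy}` is a singleton; i.e. the rank-2 flat
`cl{x,y}` has exactly 3 elements. -/
theorem stmt17 (M : Matroid α) (hfin : M.E.Finite) (hsimple : MSimple M)
    (hconn : MConnected M) (d : ℕ) (hd : 2 ≤ d) (hrk : mRank M M.E = d + 1)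
    (b bs : Set α) (hb : IsCremonaBasis M b) (hbs : IsCremonaBasis M bs) (hne : b ≠ bs)
    (x y : α) (hx : x ∈ b \ bs) (hy : y ∈ b \ bs) (hxy : x ≠ y)
    (hFne : (Fij M x y).Nonempty) :
    (∃ e, Fij M x y = {e}) ∧ (M.closure {x, y}).ncard = 3 :=
  stmt17_general M hsimple hconn d hd hrk b bs hb hbs x y hx hy hxy hFne
end

section
/- Let M be the matroid of a finite irreducible Coxeter system (W,S) of rank n, realized by the positive roots Φ+(W,S) ⊂ ℝ^S of the geometric representation. Then for every flat F of M there exist w ∈ W and J ⊆ S such that F = w·Φ+_J (the intersection of w·Φ+ rescaled into Φ+ with the span of {α_s : s ∈ J}); in the special case of type B_n realized by {x_i} ∪ {x_i ± x_j : i < j} ⊂ ℝ^n with n ≥ 3, every connected rank-(n−1) flat has at most (n−1)^2 elements. -/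
open Set

variable {α : Type*}

/-! A flat of rank `n - 1` spans a hyperplane `ker φ`, so it suffices to count the roots of `Bₙ`
in a hyperplane. Choose `i₀` with `φ xᵢ₀ ≠ 0` and index by the `(n - 1)²` pairs `(j, k)` of
indices different from `i₀`: off the diagonal the pair stands for the single root `xⱼ + xₖ` (if
`j < k`) or `xₖ - xⱼ` (if `k < j`); the diagonal pair `(j, j)` stands for the roots supported in
`{i₀, j}` that involve `j`, and at most one of these lies in `ker φ`, since any two of them span
`xᵢ₀`. -/

theorem Set.ncard_le_card_of_subset_biUnion {β ι : Type*} {s : Set β} {K : Finset ι}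
    {R : ι → Set β} (hs : s ⊆ ⋃ i ∈ K, R i) (hR : ∀ i ∈ K, (s ∩ R i).Subsingleton) :
    s.ncard ≤ K.card := by
  have hcover : ∀ x : s, ∃ i : K, (x : β) ∈ R i := fun x => by
    obtain ⟨i, hi, hxi⟩ := mem_iUnion₂.1 (hs x.2)
    exact ⟨⟨i, hi⟩, hxi⟩
  choose f hf using hcover
  have hf_inj : Function.Injective f := fun x y hxy =>
    Subtype.ext <| hR _ (f x).2 ⟨x.2, hf x⟩ ⟨y.2, hxy ▸ hf y⟩
  rw [← Nat.card_coe_set_eq, ← Nat.card_eq_finsetCard]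
  exact Nat.card_le_card_of_injective f hf_inj

theorem finrank_span_le_mRank {K V : Type*} [DivisionRing K] [AddCommGroup V] [Module K V]
    [FiniteDimensional K V] {M : Matroid V} {E F : Set V}
    (hind : ∀ I, M.Indep I ↔ I ⊆ E ∧ LinearIndependent K (fun v : I => (v : V)))
    (hF : F ⊆ E) : Module.finrank K (Submodule.span K F) ≤ mRank M F := by
  have hbdd : BddAbove {m | ∃ I, M.Indep I ∧ I ⊆ F ∧ I.ncard = m} := by
    refine ⟨Module.finrank K V, ?_⟩
    rintro _ ⟨I, hI, -, rfl⟩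
    have hI := ((hind I).1 hI).2
    have := hI.setFinite.fintype
    rw [← Nat.card_coe_set_eq, Nat.card_eq_fintype_card]
    exact hI.fintype_card_le_finrank
  obtain ⟨b, hbF, hspan, hb⟩ := exists_linearIndependent K F
  have := hb.setFinite.fintype
  rw [← hspan, finrank_span_set_eq_card hb, ← Set.ncard_eq_toFinset_card']
  exact le_csSup hbdd ⟨b, (hind b).2 ⟨hbF.trans hF, hb⟩, hbF, rfl⟩

section BnRoots

variable {n : ℕ}

local notation "e" => fun i : Fin n => (Pi.single i 1 : Fin n → ℝ)

def bnCell (i₀ : Fin n) (p : Fin n × Fin n) : Set (Fin n → ℝ) :=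
  if p.1 = p.2 then {e p.1, e i₀ + e p.1, e (min i₀ p.1) - e (max i₀ p.1)}
  else if p.1 < p.2 then {e p.1 + e p.2} else {e p.2 - e p.1}

theorem bnCell_inter_ker_subsingleton {φ : Module.Dual ℝ (Fin n → ℝ)} {i₀ : Fin n}
    (h₀ : φ (e i₀) ≠ 0) (p : Fin n × Fin n) : (bnCell i₀ p ∩ LinearMap.ker φ).Subsingleton := by
  unfold bnCell
  split_ifs
  · rintro v ⟨hv, hv0⟩ w ⟨hw, hw0⟩
    simp only [mem_insert_iff, mem_singleton_iff] at hv hw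
    simp only [SetLike.mem_coe, LinearMap.mem_ker] at hv0 hw0
    rcases le_total i₀ p.1 with h | h <;>
      simp only [min_eq_left, min_eq_right, max_eq_left, max_eq_right, h] at hv hw <;>
      rcases hv with rfl | rfl | rfl <;> rcases hw with rfl | rfl | rfl <;>
      first | rfl | (simp only [map_add, map_sub] at hv0 hw0; exfalso; apply h₀; linarith)
  · exact subsingleton_singleton.anti inter_subset_left
  · exact subsingleton_singleton.anti inter_subset_left

theorem bnRoots_inter_ker_subset_biUnion_bnCell {φ : Module.Dual ℝ (Fin n → ℝ)} {i₀ : Fin n}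
    (h₀ : φ (e i₀) ≠ 0) :
    BnRoots n ∩ LinearMap.ker φ ⊆
      ⋃ p ∈ (Finset.univ.erase i₀) ×ˢ (Finset.univ.erase i₀), bnCell i₀ p := by
  rintro v ⟨hv, hv0⟩
  simp only [mem_iUnion, exists_prop, Prod.exists, Finset.mem_product, Finset.mem_erase,
    Finset.mem_univ, and_true]
  rcases hv with ⟨i, rfl⟩ | ⟨i, j, hij, rfl | rfl⟩
  · have hi : i ≠ i₀ := by rintro rfl; exact h₀ hv0
    exact ⟨i, i, ⟨hi, hi⟩, by simp [bnCell]⟩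
  · rcases eq_or_ne i i₀ with rfl | hi
    · exact ⟨j, j, ⟨hij.ne', hij.ne'⟩, by simp [bnCell]⟩
    rcases eq_or_ne j i₀ with rfl | hj
    · exact ⟨i, i, ⟨hi, hi⟩, by simp [bnCell, add_comm]⟩
    · exact ⟨i, j, ⟨hi, hj⟩, by simp [bnCell, hij.ne, hij]⟩
  · rcases eq_or_ne i i₀ with rfl | hi
    · exact ⟨j, j, ⟨hij.ne', hij.ne'⟩, by simp [bnCell, hij.le]⟩
    rcases eq_or_ne j i₀ with rfl | hj
    · exact ⟨i, i, ⟨hi, hi⟩, by simp [bnCell, hij.le]⟩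
    · exact ⟨j, i, ⟨hj, hi⟩, by simp [bnCell, hij.ne', not_lt.2 hij.le]⟩

theorem ncard_le_of_subset_bnRoots_inter_ker {φ : Module.Dual ℝ (Fin n → ℝ)} (hφ : φ ≠ 0)
    {s : Set (Fin n → ℝ)} (hs : s ⊆ BnRoots n ∩ LinearMap.ker φ) : s.ncard ≤ (n - 1) ^ 2 := by
  obtain ⟨i₀, h₀⟩ : ∃ i₀, φ (e i₀) ≠ 0 := by
    by_contra! h
    exact hφ ((Pi.basisFun ℝ (Fin n)).ext fun i => by simpa using h i)
  calc s.ncard ≤ ((Finset.univ.erase i₀) ×ˢ (Finset.univ.erase i₀)).card :=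
        ncard_le_card_of_subset_biUnion (hs.trans (bnRoots_inter_ker_subset_biUnion_bnCell h₀))
          fun p _ => (bnCell_inter_ker_subsingleton h₀ p).anti
            fun _ ⟨hv, hvp⟩ => ⟨hvp, (hs hv).2⟩
    _ = (n - 1) ^ 2 := by simp [sq]

end BnRoots

/-- In the `Bₙ` root-system matroid (`n ≥ 3`), every connected flat of
rank `n - 1` has at most `(n-1)²` elements. -/
theorem stmt18 (n : ℕ) (hn : 3 ≤ n) (M : Matroid (Fin n → ℝ))
    (hE : M.E = BnRoots n)
    (hind : ∀ I, M.Indep I ↔ I ⊆ BnRoots n ∧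
      LinearIndependent ℝ (fun v : I => (v : Fin n → ℝ))) :
    ∀ F, M.IsFlat F → MConnected (M.restrict F) → mRank M F = n - 1 →
      F.ncard ≤ (n - 1) ^ 2 := by
  intro F hF _ hrank
  have hFE : F ⊆ BnRoots n := hE ▸ hF.subset_ground
  have hproper : Submodule.span ℝ F < ⊤ := by
    apply Submodule.lt_top_of_finrank_lt_finrank
    have := finrank_span_le_mRank hind hFE
    rw [Module.finrank_fin_fun]
    omega
  obtain ⟨φ, hφ, hFφ⟩ := Submodule.exists_dual_map_eq_bot_of_lt_top hproper inferInstance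
  exact ncard_le_of_subset_bnRoots_inter_ker hφ fun v hv =>
    ⟨hFE hv, LinearMap.le_ker_iff_map.2 hFφ (Submodule.subset_span hv)⟩
end
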